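/- arXiv:2506.20317 — 6 statements merged into one kernel-verified Lean document; each statement's English description precedes it below -/
import Mathlib

section
/- In every multi-graph instance with n ≥ 2 agents all of whose valuations are additive, there exists an orientation X that is both MMS, i.e., v_i(X_i) ≥ μ_i^n for every agent i, and PMMS, i.e., v_i(X_i) ≥ PMMS_i(X) for every agent i. -/
open Finset

/-- A multi-graph fair-division instance: agents `V` (vertices), items `E` (edges of a
multi-graph on `V`), an endpoint map assigning to each item an unordered pair of agents
(self-loops allowed), and for each agent a nonnegative, normalized, monotone, graphical
valuation on sets of items. -/
structure GraphInstance (V E : Type) [DecidableEq E] where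
  ep : E → Sym2 V
  val : V → Finset E → ℝ
  val_nonneg : ∀ i S, 0 ≤ val i S
  val_empty : ∀ i, val i ∅ = 0
  val_mono : ∀ i ⦃S T : Finset E⦄, S ⊆ T → val i S ≤ val i T
  graphical : ∀ i e, i ∉ ep e → ∀ S : Finset E, val i (insert e S) = val i S

variable {V E : Type}

/-- `P` is a partition of `F` into `d` (possibly empty) parts. -/
def IsPartitionInto [DecidableEq E] (d : ℕ) (P : Fin d → Finset E) (F : Finset E) : Prop :=
  (∀ s t : Fin d, s ≠ t → Disjoint (P s) (P t)) ∧ Finset.univ.biUnion P = F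

/-- The `1`-out-of-`d` maximin share value `μ^d(F)` of a valuation `v` on ground set `F`:
the maximum, over all partitions of `F` into `d` (possibly empty) parts, of the minimum
value of a part. -/
noncomputable def mms [DecidableEq E] (v : Finset E → ℝ) (d : ℕ) (F : Finset E) : ℝ :=
  sSup {x | ∃ P : Fin d → Finset E, IsPartitionInto d P F ∧ x = ⨅ t, v (P t)}

/-- An allocation: a family of pairwise disjoint bundles. -/
def IsAllocation [DecidableEq E] (X : V → Finset E) : Prop :=
  ∀ i j : V, i ≠ j → Disjoint (X i) (X j)

/-- An orientation: an allocation in which every item is given to one of its endpoints. -/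
def IsOrientation [DecidableEq E] (I : GraphInstance V E) (X : V → Finset E) : Prop :=
  IsAllocation X ∧ ∀ e : E, ∃ i, i ∈ I.ep e ∧ e ∈ X i

/-- Additive valuation. -/
def IsAdditiveVal [DecidableEq E] (v : Finset E → ℝ) : Prop :=
  ∀ S : Finset E, v S = ∑ e ∈ S, v {e}

/-- XOS (fractionally subadditive) valuation: the pointwise maximum of finitely many
additive functions with nonnegative singleton values. -/
def IsXOSVal [DecidableEq E] (v : Finset E → ℝ) : Prop :=
  ∃ (A : Finset (E → ℝ)) (hA : A.Nonempty),
    (∀ a ∈ A, ∀ e, 0 ≤ a e) ∧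
    ∀ S : Finset E, v S = A.sup' hA fun a => ∑ e ∈ S, a e

/-- Subadditive valuation. -/
def IsSubadditiveVal [DecidableEq E] (v : Finset E → ℝ) : Prop :=
  ∀ S T : Finset E, v (S ∪ T) ≤ v S + v T

/-- The PMMS threshold of agent `i` under allocation `X`:
`PMMS_i(X) = max_{j ≠ i} μ_i^2(X_i ∪ X_j)`. -/
noncomputable def pmmsVal [DecidableEq E] (I : GraphInstance V E) (X : V → Finset E)
    (i : V) : ℝ :=
  sSup {x | ∃ j : V, j ≠ i ∧ x = mms (I.val i) 2 (X i ∪ X j)}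

/-- A canonical 1-out-of-`d` MMS partition of the full ground set for valuation `v`:
a partition into `d` parts whose minimum part value equals `μ^d`. -/
def IsCanonicalPartition [DecidableEq E] [Fintype E] (v : Finset E → ℝ) (d : ℕ)
    (B : Fin d → Finset E) : Prop :=
  IsPartitionInto d B Finset.univ ∧ (⨅ t, v (B t)) = mms v d Finset.univ

/-!
Group the items by their pair of endpoints. On the items of a pair `{a, b}` one endpoint cuts
them into two bundles maximizing the smaller of its two values, the other endpoint chooses its
preferred bundle; the items of a loop go to its endpoint. Each agent then holds, on the items of
every pair containing it, at least the smaller bundle of any split of them. For `j ≠ i` the only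
items of `X i ∪ X j` that `i` values and does not own belong to the pair `{i, j}`, so this gives
PMMS.

For MMS with `n ≥ 3`: a chooser gets half of a pair's value and, by a balanced split, a cutter
gets half of it up to one item. If the pairs are ordered so that every agent is the chooser of
some pair, each agent cuts at most `n - 2` pairs, so after deleting at most `n - 2` items the
rest is worth at most `2 v_i(X_i)`; two bundles of any `n`-partition miss those items. For
`n = 2` every item lies in `X i ∪ X j`, and MMS is PMMS.
-/

section Additive

variable [DecidableEq E] {v : Finset E → ℝ}

lemma Finset.exists_subset_abs_sum_sdiff_sub_sum_le {w : E → ℝ} {M : ℝ} (F : Finset E)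
    (hw : ∀ e ∈ F, 0 ≤ w e) (hM : ∀ e ∈ F, w e ≤ M) (hM0 : 0 ≤ M) :
    ∃ B ⊆ F, |∑ e ∈ F \ B, w e - ∑ e ∈ B, w e| ≤ M := by
  induction F using Finset.induction_on with
  | empty => exact ⟨∅, empty_subset _, by simpa using hM0⟩
  | insert a F ha ih =>
    obtain ⟨B, hBF, hB⟩ := ih (fun e he => hw e (mem_insert_of_mem he))
      (fun e he => hM e (mem_insert_of_mem he))
    have ha0 := hw a (mem_insert_self a F)
    have haM := hM a (mem_insert_self a F)
    have haB : a ∉ B := fun h => ha (hBF h)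
    rw [abs_le] at hB
    -- add `a` to the lighter side
    rcases le_total 0 (∑ e ∈ F \ B, w e - ∑ e ∈ B, w e) with hD | hD
    · refine ⟨insert a B, insert_subset_insert a hBF, ?_⟩
      rw [insert_sdiff_insert, sdiff_insert_of_notMem ha, sum_insert haB, abs_le]
      constructor <;> linarith
    · refine ⟨B, hBF.trans (subset_insert a F), ?_⟩
      rw [insert_sdiff_of_notMem F haB, sum_insert (fun h => ha (mem_sdiff.1 h).1), abs_le]
      constructor <;> linarith

namespace IsAdditiveVal

lemma map_empty (hv : IsAdditiveVal v) : v ∅ = 0 := by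
  rw [hv, sum_empty]

lemma singleton_nonneg (hv : IsAdditiveVal v) (hmono : Monotone v) (e : E) : 0 ≤ v {e} :=
  hv.map_empty ▸ hmono (empty_subset {e})

lemma union_of_disjoint (hv : IsAdditiveVal v) {S T : Finset E} (h : Disjoint S T) :
    v (S ∪ T) = v S + v T := by
  rw [hv, hv S, hv T, sum_union h]

lemma inter_add_sdiff (hv : IsAdditiveVal v) (S T : Finset E) :
    v (S ∩ T) + v (S \ T) = v S := by
  rw [hv, hv (S \ T), hv S, sum_inter_add_sum_sdiff]

lemma sdiff_add_of_subset (hv : IsAdditiveVal v) {S T : Finset E} (h : T ⊆ S) :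
    v (S \ T) + v T = v S := by
  rw [hv, hv T, hv S, sum_sdiff h]

lemma union_le (hv : IsAdditiveVal v) (hmono : Monotone v) (S T : Finset E) :
    v (S ∪ T) ≤ v S + v T := by
  have hinter : 0 ≤ v (S ∩ T) := hv.map_empty ▸ hmono (empty_subset _)
  have := sum_union_inter (s₁ := S) (s₂ := T) (f := fun e => v {e})
  rw [← hv, ← hv, ← hv, ← hv] at this
  linarith

lemma eq_sum_fiberwise {β : Type*} [Fintype β] [DecidableEq β] (hv : IsAdditiveVal v)
    (f : E → β) (T : Finset E) : v T = ∑ b, v (T.filter (f · = b)) := by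
  rw [hv, ← sum_fiberwise T f]
  exact sum_congr rfl fun b _ => (hv _).symm

lemma exists_card_le_one_sdiff_le_two_mul_min (hv : IsAdditiveVal v) (hmono : Monotone v)
    (F : Finset E) :
    ∃ T ⊆ F, T.card ≤ 1 ∧ ∃ B ⊆ F, v (F \ T) ≤ 2 * min (v B) (v (F \ B)) := by
  rcases F.eq_empty_or_nonempty with rfl | hF
  · exact ⟨∅, subset_refl _, by simp, ∅, subset_refl _, by simp [hv.map_empty]⟩
  obtain ⟨ε, hε, hmax⟩ := F.exists_max_image (fun e => v {e}) hF
  obtain ⟨B, hBF, hB⟩ := F.exists_subset_abs_sum_sdiff_sub_sum_le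
    (fun e _ => hv.singleton_nonneg hmono e) hmax (hv.singleton_nonneg hmono ε)
  refine ⟨{ε}, singleton_subset_iff.2 hε, (card_singleton ε).le, B, hBF, ?_⟩
  rw [← hv B, ← hv (F \ B), abs_le] at hB
  have hε' := hv.sdiff_add_of_subset (singleton_subset_iff.2 hε)
  have hB' := hv.sdiff_add_of_subset hBF
  rcases min_cases (v B) (v (F \ B)) with ⟨h, -⟩ | ⟨h, -⟩ <;> rw [h] <;> linarith [hB.1, hB.2]

lemma two_mul_iInf_le {d : ℕ} {P : Fin d → Finset E} {F S : Finset E} (hv : IsAdditiveVal v)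
    (hmono : Monotone v) (hP : IsPartitionInto d P F) (hS : S.card + 2 ≤ d) :
    2 * ⨅ t, v (P t) ≤ v (F \ S) := by
  set touched := univ.filter fun t => ¬ Disjoint (P t) S
  have htouched : touched.card ≤ S.card := by
    refine card_le_card_of_forall_subsingleton (fun t e => e ∈ P t) (fun t ht => ?_)
      fun e _ t₁ ht₁ t₂ ht₂ => ?_
    · obtain ⟨e, het, heS⟩ := not_disjoint_iff.1 (mem_filter.1 ht).2
      exact ⟨e, heS, het⟩
    · by_contra hne
      exact disjoint_left.1 (hP.1 t₁ t₂ hne) ht₁.2 ht₂.2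
  have hfree : 1 < (univ \ touched).card := by
    rw [card_univ_sdiff, Fintype.card_fin]
    omega
  obtain ⟨t₁, ht₁, t₂, ht₂, hne⟩ := one_lt_card.1 hfree
  have hdisjS : ∀ t ∈ univ \ touched, Disjoint (P t) S := fun t ht => by
    simpa [touched] using ht
  have hsub : P t₁ ∪ P t₂ ⊆ F \ S := by
    rw [← hP.2, subset_sdiff]
    exact ⟨union_subset (subset_biUnion_of_mem P (mem_univ t₁))
      (subset_biUnion_of_mem P (mem_univ t₂)),
      disjoint_union_left.2 ⟨hdisjS t₁ ht₁, hdisjS t₂ ht₂⟩⟩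
  have hbdd := (Set.finite_range fun t => v (P t)).bddBelow
  calc 2 * ⨅ t, v (P t) ≤ v (P t₁) + v (P t₂) := by
        linarith [ciInf_le hbdd t₁, ciInf_le hbdd t₂]
    _ = v (P t₁ ∪ P t₂) := (hv.union_of_disjoint (hP.1 t₁ t₂ hne)).symm
    _ ≤ v (F \ S) := hmono hsub

lemma iInf_le_of_forall_min_le {P : Fin 2 → Finset E} {U F A : Finset E}
    (hv : IsAdditiveVal v) (hmono : Monotone v) (hP : IsPartitionInto 2 P U) (hFU : F ⊆ U)
    (hout : v (U \ F) ≤ v (A \ F)) (hcut : ∀ B ⊆ F, min (v B) (v (F \ B)) ≤ v (A ∩ F)) :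
    ⨅ t, v (P t) ≤ v A := by
  have hcover : F ⊆ P 0 ∪ P 1 := by
    rw [← hP.2] at hFU
    simpa [Fin.univ_succ] using hFU
  have hcompl : F \ (P 0 ∩ F) = P 1 ∩ F := by
    ext e
    simp only [mem_sdiff, mem_inter]
    constructor
    · rintro ⟨hF, h0⟩
      exact ⟨(mem_union.1 (hcover hF)).resolve_left fun h => h0 ⟨h, hF⟩, hF⟩
    · rintro ⟨h1, hF⟩
      exact ⟨hF, fun h0 => disjoint_left.1 (hP.1 0 1 (by decide)) h0.1 h1⟩
  have hpart : ∀ t, v (P t) ≤ v (P t ∩ F) + v (A \ F) := fun t => by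
    have hsplit := hv.inter_add_sdiff (P t) F
    have hrest : v (P t \ F) ≤ v (U \ F) :=
      hmono (sdiff_subset_sdiff (hP.2 ▸ subset_biUnion_of_mem P (mem_univ t)) le_rfl)
    linarith
  have hmin := hcut (P 0 ∩ F) inter_subset_right
  rw [hcompl] at hmin
  have hA := hv.inter_add_sdiff A F
  have hbdd := (Set.finite_range fun t => v (P t)).bddBelow
  have h0 := (ciInf_le hbdd 0).trans (hpart 0)
  have h1 := (ciInf_le hbdd 1).trans (hpart 1)
  rcases min_cases (v (P 0 ∩ F)) (v (P 1 ∩ F)) with ⟨h, -⟩ | ⟨h, -⟩ <;> rw [h] at hmin <;>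
    linarith

end IsAdditiveVal

end Additive

lemma mms_le_of_forall [DecidableEq E] {v : Finset E → ℝ} {d : ℕ} {F : Finset E}
    {a : ℝ} (ha : 0 ≤ a) (h : ∀ P, IsPartitionInto d P F → ⨅ t, v (P t) ≤ a) :
    mms v d F ≤ a :=
  Real.sSup_le (by rintro x ⟨P, hP, rfl⟩; exact h P hP) ha

section Cutting

variable [DecidableEq E] {vc vh : Finset E → ℝ} {F B : Finset E}

lemma exists_max_min_split (v : Finset E → ℝ) (F : Finset E) :
    ∃ A ⊆ F, ∀ B ⊆ F, min (v B) (v (F \ B)) ≤ min (v A) (v (F \ A)) := by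
  obtain ⟨A, hA, hmax⟩ := F.powerset.exists_max_image (fun B => min (v B) (v (F \ B)))
    ⟨∅, empty_mem_powerset F⟩
  exact ⟨A, mem_powerset.1 hA, fun B hB => hmax B (mem_powerset.2 hB)⟩

noncomputable def bestSplit (v : Finset E → ℝ) (F : Finset E) : Finset E :=
  (exists_max_min_split v F).choose

lemma bestSplit_subset (v : Finset E → ℝ) (F : Finset E) : bestSplit v F ⊆ F :=
  (exists_max_min_split v F).choose_spec.1

lemma min_le_min_bestSplit {v : Finset E → ℝ} (hB : B ⊆ F) :
    min (v B) (v (F \ B)) ≤ min (v (bestSplit v F)) (v (F \ bestSplit v F)) :=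
  (exists_max_min_split v F).choose_spec.2 B hB

noncomputable def cutterPart (vc vh : Finset E → ℝ) (F : Finset E) : Finset E :=
  if vh (bestSplit vc F) ≤ vh (F \ bestSplit vc F) then bestSplit vc F else F \ bestSplit vc F

lemma cutterPart_subset : cutterPart vc vh F ⊆ F := by
  unfold cutterPart
  split_ifs
  exacts [bestSplit_subset vc F, sdiff_subset]

lemma min_le_cutterPart (hB : B ⊆ F) : min (vc B) (vc (F \ B)) ≤ vc (cutterPart vc vh F) := by
  refine (min_le_min_bestSplit hB).trans ?_
  unfold cutterPart
  split_ifs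
  exacts [min_le_left _ _, min_le_right _ _]

lemma cutterPart_le_sdiff : vh (cutterPart vc vh F) ≤ vh (F \ cutterPart vc vh F) := by
  unfold cutterPart
  split_ifs with h
  · exact h
  · rw [Finset.sdiff_sdiff_eq_self (bestSplit_subset vc F)]
    exact (lt_of_not_ge h).le

end Cutting

section PairOrder

/-- `σ` orders every pair: `(σ q).1` is the cutter of `q` and `(σ q).2` its chooser. -/
def IsPairOrder (σ : Sym2 V → V × V) : Prop :=
  ∀ q, s((σ q).1, (σ q).2) = q

variable {σ : Sym2 V → V × V} {i j : V} {q : Sym2 V}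

lemma IsPairOrder.mem_iff (hσ : IsPairOrder σ) : i ∈ q ↔ i = (σ q).1 ∨ i = (σ q).2 := by
  rw [← Sym2.mem_iff, hσ q]

lemma IsPairOrder.fst_mem (hσ : IsPairOrder σ) (q : Sym2 V) : (σ q).1 ∈ q :=
  hσ.mem_iff.2 (Or.inl rfl)

lemma IsPairOrder.snd_mem (hσ : IsPairOrder σ) (q : Sym2 V) : (σ q).2 ∈ q :=
  hσ.mem_iff.2 (Or.inr rfl)

variable [DecidableEq V] [Fintype V]

def cutPairs (σ : Sym2 V → V × V) (i : V) : Finset (Sym2 V) :=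
  univ.filter fun q => (σ q).1 = i ∧ (σ q).2 ≠ i

lemma IsPairOrder.eq_mk_of_mem_cutPairs (hσ : IsPairOrder σ) (hq : q ∈ cutPairs σ i) :
    q = s(i, (σ q).2) :=
  calc q = s((σ q).1, (σ q).2) := (hσ q).symm
    _ = s(i, (σ q).2) := by rw [(mem_filter.1 hq).2.1]

lemma IsPairOrder.card_cutPairs_add_two_le (hσ : IsPairOrder σ) (hji : j ≠ i)
    (hσj : σ s(i, j) = (j, i)) : (cutPairs σ i).card + 2 ≤ Fintype.card V := by
  have hmaps : ∀ q ∈ cutPairs σ i, (σ q).2 ∈ (univ : Finset V) \ {i, j} := fun q hq => by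
    have hq' := (mem_filter.1 hq).2
    refine mem_sdiff.2 ⟨mem_univ _, ?_⟩
    rw [mem_insert, mem_singleton, not_or]
    refine ⟨hq'.2, fun h => hji ?_⟩
    have hqij : q = s(i, j) := h ▸ hσ.eq_mk_of_mem_cutPairs hq
    rw [← hq'.1, hqij, hσj]
  have hinj : Set.InjOn (fun q => (σ q).2) (cutPairs σ i) := fun q₁ h₁ q₂ h₂ h => by
    rw [hσ.eq_mk_of_mem_cutPairs h₁, hσ.eq_mk_of_mem_cutPairs h₂]
    exact congrArg _ h
  have hcard := card_le_card_of_injOn _ hmaps hinj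
  have hsplit := card_sdiff_add_card_eq_card (subset_univ ({i, j} : Finset V))
  rw [card_pair hji.symm, card_univ] at hsplit
  omega

end PairOrder

/-- The exception `{0, n - 1}` makes every agent the chooser of some pair. -/
def finPairOrder (n : ℕ) (q : Sym2 (Fin n)) : Fin n × Fin n :=
  if q.inf.val = 0 ∧ q.sup.val = n - 1 then (q.inf, q.sup) else (q.sup, q.inf)

lemma isPairOrder_finPairOrder (n : ℕ) : IsPairOrder (finPairOrder n) := fun q => by
  have h : s(q.inf, q.sup) = q := Sym2.sortEquiv.symm_apply_apply q
  unfold finPairOrder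
  split_ifs
  exacts [h, Sym2.eq_swap.trans h]

lemma exists_finPairOrder_eq_swap {n : ℕ} (hn : 3 ≤ n) (i : Fin n) :
    ∃ j ≠ i, finPairOrder n s(i, j) = (j, i) := by
  by_cases hi : i.val + 1 < n
  · have hle : i ≤ ⟨i + 1, hi⟩ := Fin.le_iff_val_le_val.2 (Nat.le_succ _)
    refine ⟨⟨i + 1, hi⟩, fun h => by simp [Fin.ext_iff] at h, ?_⟩
    rw [finPairOrder, if_neg (by simp [hle]; omega)]
    simp [hle]
  · have hle : (⟨0, by omega⟩ : Fin n) ≤ i := Fin.le_iff_val_le_val.2 (Nat.zero_le _)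
    refine ⟨⟨0, by omega⟩, fun h => by simp [Fin.ext_iff] at h; omega, ?_⟩
    rw [finPairOrder, if_pos (by simp [hle]; omega)]
    simp [hle]

namespace GraphInstance

variable [DecidableEq E] (I : GraphInstance V E) {σ : Sym2 V → V × V} {i j : V}
  {q : Sym2 V} {B : Finset E}

lemma monotone_val (i : V) : Monotone (I.val i) := fun _ _ h => I.val_mono i h

lemma val_eq_zero_of_forall_notMem {S : Finset E} (h : ∀ e ∈ S, i ∉ I.ep e) :
    I.val i S = 0 := by
  induction S using Finset.induction_on with
  | empty => exact I.val_empty i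
  | insert a S _ ih =>
    rw [I.graphical i a (h a (mem_insert_self a S)), ih fun e he => h e (mem_insert_of_mem he)]

lemma mms_le_pmmsVal [Finite V] {X : V → Finset E} (hji : j ≠ i) :
    mms (I.val i) 2 (X i ∪ X j) ≤ pmmsVal I X i := by
  refine le_csSup (Set.Finite.bddAbove ?_) ⟨j, hji, rfl⟩
  refine (Set.finite_range fun j => mms (I.val i) 2 (X i ∪ X j)).subset ?_
  rintro x ⟨j, -, rfl⟩
  exact ⟨j, rfl⟩

variable [DecidableEq V] [Fintype E]

def itemsOf (q : Sym2 V) : Finset E := univ.filter (I.ep · = q)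

lemma mem_itemsOf {e : E} : e ∈ I.itemsOf q ↔ I.ep e = q := by
  simp [itemsOf]

noncomputable def keptPart (σ : Sym2 V → V × V) (q : Sym2 V) : Finset E :=
  cutterPart (I.val (σ q).1) (I.val (σ q).2) (I.itemsOf q)

lemma keptPart_subset : I.keptPart σ q ⊆ I.itemsOf q := cutterPart_subset

noncomputable def cutChooseOwner (σ : Sym2 V → V × V) (e : E) : V :=
  if e ∈ I.keptPart σ (I.ep e) then (σ (I.ep e)).1 else (σ (I.ep e)).2

noncomputable def cutChoose (σ : Sym2 V → V × V) (i : V) : Finset E :=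
  univ.filter (I.cutChooseOwner σ · = i)

lemma mem_cutChoose {e : E} : e ∈ I.cutChoose σ i ↔ I.cutChooseOwner σ e = i := by
  simp [cutChoose]

lemma cutChooseOwner_mem (hσ : IsPairOrder σ) (e : E) : I.cutChooseOwner σ e ∈ I.ep e := by
  unfold cutChooseOwner
  split_ifs
  exacts [hσ.fst_mem _, hσ.snd_mem _]

lemma isOrientation_cutChoose (hσ : IsPairOrder σ) : IsOrientation I (I.cutChoose σ) :=
  ⟨fun _ _ hij => disjoint_left.2 fun _ hi hj =>
      hij ((I.mem_cutChoose.1 hi).symm.trans (I.mem_cutChoose.1 hj)),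
    fun e => ⟨_, I.cutChooseOwner_mem hσ e, I.mem_cutChoose.2 rfl⟩⟩

lemma keptPart_subset_cutChoose : I.keptPart σ q ⊆ I.cutChoose σ (σ q).1 ∩ I.itemsOf q :=
  fun e he => by
    obtain rfl : I.ep e = q := I.mem_itemsOf.1 (I.keptPart_subset he)
    exact mem_inter.2 ⟨I.mem_cutChoose.2 (if_pos he), I.mem_itemsOf.2 rfl⟩

lemma sdiff_keptPart_subset_cutChoose :
    I.itemsOf q \ I.keptPart σ q ⊆ I.cutChoose σ (σ q).2 ∩ I.itemsOf q := fun e he => by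
  obtain ⟨heq, hkept⟩ := mem_sdiff.1 he
  obtain rfl : I.ep e = q := I.mem_itemsOf.1 heq
  exact mem_inter.2 ⟨I.mem_cutChoose.2 (if_neg hkept), heq⟩

lemma val_itemsOf_le_chooser (hadd : IsAdditiveVal (I.val (σ q).2)) :
    I.val (σ q).2 (I.itemsOf q) ≤
      2 * I.val (σ q).2 (I.cutChoose σ (σ q).2 ∩ I.itemsOf q) := by
  have hchoose : I.val (σ q).2 (I.keptPart σ q) ≤
      I.val (σ q).2 (I.itemsOf q \ I.keptPart σ q) :=
    cutterPart_le_sdiff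
  have hsplit := hadd.sdiff_add_of_subset (I.keptPart_subset (σ := σ) (q := q))
  have hown := I.val_mono (σ q).2 (I.sdiff_keptPart_subset_cutChoose (σ := σ) (q := q))
  linarith

lemma min_le_val_cutChoose_inter (hσ : IsPairOrder σ) (hadd : IsAdditiveVal (I.val i))
    (hi : i ∈ q) (hB : B ⊆ I.itemsOf q) :
    min (I.val i B) (I.val i (I.itemsOf q \ B)) ≤ I.val i (I.cutChoose σ i ∩ I.itemsOf q) := by
  rcases hσ.mem_iff.1 hi with rfl | rfl
  · exact (min_le_cutterPart hB).trans (I.val_mono _ I.keptPart_subset_cutChoose)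
  · have hsplit := hadd.sdiff_add_of_subset hB
    have hhalf := I.val_itemsOf_le_chooser hadd
    linarith [min_le_left (I.val (σ q).2 B) (I.val (σ q).2 (I.itemsOf q \ B)),
      min_le_right (I.val (σ q).2 B) (I.val (σ q).2 (I.itemsOf q \ B))]

lemma exists_card_le_one_val_sdiff_le (hσ : IsPairOrder σ) (hadd : IsAdditiveVal (I.val i))
    (hi : i ∈ q) :
    ∃ T : Finset E, T.card ≤ 1 ∧
      I.val i (I.itemsOf q \ T) ≤ 2 * I.val i (I.cutChoose σ i ∩ I.itemsOf q) := by
  obtain ⟨T, -, hTcard, B, hB, hTB⟩ :=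
    hadd.exists_card_le_one_sdiff_le_two_mul_min (I.monotone_val i) (I.itemsOf q)
  have hmin := I.min_le_val_cutChoose_inter hσ hadd hi hB
  exact ⟨T, hTcard, by linarith⟩

lemma itemsOf_subset_cutChoose_union (hσ : IsPairOrder σ) :
    I.itemsOf s(i, j) ⊆ I.cutChoose σ i ∪ I.cutChoose σ j := fun e he => by
  have hown := I.cutChooseOwner_mem hσ e
  rw [I.mem_itemsOf.1 he, Sym2.mem_iff] at hown
  rcases hown with h | h
  exacts [mem_union_left _ (I.mem_cutChoose.2 h), mem_union_right _ (I.mem_cutChoose.2 h)]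

lemma val_union_sdiff_itemsOf_le (hσ : IsPairOrder σ) (hadd : IsAdditiveVal (I.val i))
    (hji : j ≠ i) :
    I.val i ((I.cutChoose σ i ∪ I.cutChoose σ j) \ I.itemsOf s(i, j)) ≤
      I.val i (I.cutChoose σ i \ I.itemsOf s(i, j)) := by
  have hzero : I.val i (I.cutChoose σ j \ I.itemsOf s(i, j)) = 0 :=
    I.val_eq_zero_of_forall_notMem fun e he hie => by
      obtain ⟨hej, heq⟩ := mem_sdiff.1 he
      have hje : j ∈ I.ep e := I.mem_cutChoose.1 hej ▸ I.cutChooseOwner_mem hσ e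
      exact heq (I.mem_itemsOf.2 ((Sym2.mem_and_mem_iff hji.symm).1 ⟨hie, hje⟩))
  rw [union_sdiff_distrib]
  linarith [hadd.union_le (I.monotone_val i) (I.cutChoose σ i \ I.itemsOf s(i, j))
    (I.cutChoose σ j \ I.itemsOf s(i, j))]

lemma pmmsVal_cutChoose_le (hσ : IsPairOrder σ) (hadd : IsAdditiveVal (I.val i)) :
    pmmsVal I (I.cutChoose σ) i ≤ I.val i (I.cutChoose σ i) := by
  refine Real.sSup_le ?_ (I.val_nonneg _ _)
  rintro x ⟨j, hji, rfl⟩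
  refine mms_le_of_forall (I.val_nonneg _ _) fun P hP => ?_
  exact hadd.iInf_le_of_forall_min_le (I.monotone_val i) hP
    (I.itemsOf_subset_cutChoose_union hσ) (I.val_union_sdiff_itemsOf_le hσ hadd hji)
    fun B hB => I.min_le_val_cutChoose_inter hσ hadd (Sym2.mem_mk_left i j) hB

variable [Fintype V]

lemma val_eq_sum_itemsOf (hadd : IsAdditiveVal (I.val i)) (T : Finset E) :
    I.val i T = ∑ q, I.val i (T ∩ I.itemsOf q) := by
  rw [hadd.eq_sum_fiberwise I.ep T]
  refine sum_congr rfl fun q _ => congrArg _ ?_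
  ext e
  simp [mem_itemsOf]

lemma val_itemsOf_le_of_notMem_cutPairs (hσ : IsPairOrder σ) (hadd : IsAdditiveVal (I.val i))
    (hq : q ∉ cutPairs σ i) :
    I.val i (I.itemsOf q) ≤ 2 * I.val i (I.cutChoose σ i ∩ I.itemsOf q) := by
  by_cases hi : i ∈ q
  · obtain rfl : i = (σ q).2 := by
      simp only [cutPairs, mem_filter, mem_univ, true_and, not_and, not_not] at hq
      exact (hσ.mem_iff.1 hi).elim (fun h => (hq h.symm).symm) id
    exact I.val_itemsOf_le_chooser hadd
  · rw [I.val_eq_zero_of_forall_notMem fun e he => (I.mem_itemsOf.1 he) ▸ hi]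
    linarith [I.val_nonneg i (I.cutChoose σ i ∩ I.itemsOf q)]

lemma exists_card_le_val_univ_sdiff_le (hσ : IsPairOrder σ) (hadd : IsAdditiveVal (I.val i)) :
    ∃ S : Finset E, S.card ≤ (cutPairs σ i).card ∧
      I.val i (univ \ S) ≤ 2 * I.val i (I.cutChoose σ i) := by
  have hT : ∀ q ∈ cutPairs σ i, ∃ T : Finset E, T.card ≤ 1 ∧
      I.val i (I.itemsOf q \ T) ≤ 2 * I.val i (I.cutChoose σ i ∩ I.itemsOf q) := fun q hq =>
    I.exists_card_le_one_val_sdiff_le hσ hadd ((mem_filter.1 hq).2.1 ▸ hσ.fst_mem q)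
  choose! T hTcard hTval using hT
  refine ⟨(cutPairs σ i).biUnion T, by simpa using card_biUnion_le_card_mul _ _ 1 hTcard, ?_⟩
  rw [I.val_eq_sum_itemsOf hadd, I.val_eq_sum_itemsOf hadd (I.cutChoose σ i), mul_sum]
  refine sum_le_sum fun q _ => ?_
  by_cases hq : q ∈ cutPairs σ i
  · refine le_trans (I.val_mono i fun e he => ?_) (hTval q hq)
    simp only [mem_inter, mem_sdiff, mem_univ, true_and, mem_biUnion, not_exists,
      not_and] at he
    exact mem_sdiff.2 ⟨he.2, he.1 q hq⟩
  · exact (I.val_mono i inter_subset_right).trans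
      (I.val_itemsOf_le_of_notMem_cutPairs hσ hadd hq)

lemma mms_le_val_cutChoose (hσ : IsPairOrder σ) (hadd : IsAdditiveVal (I.val i)) {d : ℕ}
    (hd : (cutPairs σ i).card + 2 ≤ d) : mms (I.val i) d univ ≤ I.val i (I.cutChoose σ i) := by
  obtain ⟨S, hS, hval⟩ := I.exists_card_le_val_univ_sdiff_le hσ hadd
  refine mms_le_of_forall (I.val_nonneg _ _) fun P hP => ?_
  have := hadd.two_mul_iInf_le (I.monotone_val i) hP (by omega : S.card + 2 ≤ d)
  linarith

end GraphInstance

lemma IsOrientation.union_eq_univ [Fintype E] [DecidableEq E]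
    {I : GraphInstance V E} {X : V → Finset E} (hX : IsOrientation I X) {i j : V}
    (hV : ∀ k, k = i ∨ k = j) : X i ∪ X j = univ :=
  eq_univ_of_forall fun e => by
    obtain ⟨k, -, hk⟩ := hX.2 e
    rcases hV k with rfl | rfl
    exacts [mem_union_left _ hk, mem_union_right _ hk]

/-- In every multi-graph instance with `n ≥ 2` agents, all of whose
valuations are additive, there exists an orientation `X` that is both MMS
(`v_i(X_i) ≥ μ_i^n` for every agent `i`) and PMMS (`v_i(X_i) ≥ PMMS_i(X)` for every
agent `i`). -/
theorem stmt1 {n : ℕ} (hn : 2 ≤ n) {E : Type} [Fintype E] [DecidableEq E]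
    (I : GraphInstance (Fin n) E)
    (hadd : ∀ i, IsAdditiveVal (I.val i)) :
    ∃ X : Fin n → Finset E, IsOrientation I X ∧
      (∀ i, mms (I.val i) n Finset.univ ≤ I.val i (X i)) ∧
      (∀ i, pmmsVal I X i ≤ I.val i (X i)) := by
  have hσ := isPairOrder_finPairOrder n
  have hX := I.isOrientation_cutChoose hσ
  have hpmms : ∀ i, pmmsVal I (I.cutChoose (finPairOrder n)) i ≤
      I.val i (I.cutChoose (finPairOrder n) i) :=
    fun i => I.pmmsVal_cutChoose_le hσ (hadd i)
  refine ⟨I.cutChoose (finPairOrder n), hX, fun i => ?_, hpmms⟩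
  rcases (show n = 2 ∨ 3 ≤ n by omega) with rfl | hn3
  · obtain ⟨j, hji⟩ := exists_ne i
    have hV : ∀ k, k = i ∨ k = j := fun k => by
      simp only [Fin.ext_iff, ne_eq] at hji ⊢
      omega
    rw [← hX.union_eq_univ hV]
    exact (I.mms_le_pmmsVal hji).trans (hpmms i)
  · obtain ⟨j, hji, hσj⟩ := exists_finPairOrder_eq_swap hn3 i
    have hcut := hσ.card_cutPairs_add_two_le hji hσj
    rw [Fintype.card_fin] at hcut
    exact I.mms_le_val_cutChoose hσ (hadd i) hcut
end

section
/- In every multi-graph instance with n ≥ 1 agents all of whose valuations are additive, there exists an orientation X with v_i(X_i) ≥ μ_i^3 for every agent i, i.e., a 1-out-of-3 MMS orientation. In particular, for n ≥ 3 this orientation satisfies v_i(X_i) ≥ μ_i^n for every agent i. -/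
open Finset

variable {V E : Type}

/-!
Every agent sorts its incident items by decreasing value and cuts the sorted list into
consecutive pairs. A pair has two items and an item lies in at most one pair of each of its
two endpoints, so Hall's theorem picks a distinct item from every pair, and that item is
oriented towards the owner of the pair. An item that agent `i` loses is then worth at most the
item `i` keeps in the previous pair (at most the top item, for the first pair), so
`v_i(E) ≤ v_i(top item) + 2 v_i(X_i)`. In a partition into `d ≥ 3` parts two parts avoid the
top item, and the smaller of them is worth at most `v_i(X_i)`.
-/

section ConsecutivePairs

variable {α : Type*} [DecidableEq α]

def consecutivePairs : List α → List (Finset α)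
  | a :: b :: l => {a, b} :: consecutivePairs l
  | _ => []

theorem mem_of_mem_consecutivePairs :
    ∀ {l : List α} {s : Finset α} {e : α}, s ∈ consecutivePairs l → e ∈ s → e ∈ l
  | [], _, _, hs, _ => by simp [consecutivePairs] at hs
  | [_], _, _, hs, _ => by simp [consecutivePairs] at hs
  | a :: b :: l, s, e, hs, he => by
    rcases List.mem_cons.1 hs with rfl | hs
    · rcases Finset.mem_insert.1 he with rfl | he
      · simp
      · simp [Finset.mem_singleton.1 he]
    · exact List.mem_cons_of_mem _ (List.mem_cons_of_mem _ (mem_of_mem_consecutivePairs hs he))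

theorem card_of_mem_consecutivePairs :
    ∀ {l : List α} {s : Finset α}, l.Nodup → s ∈ consecutivePairs l → s.card = 2
  | [], _, _, hs => by simp [consecutivePairs] at hs
  | [_], _, _, hs => by simp [consecutivePairs] at hs
  | a :: b :: l, s, hl, hs => by
    rcases List.mem_cons.1 hs with rfl | hs
    · have hab : a ≠ b := by simp_all
      exact Finset.card_pair hab
    · exact card_of_mem_consecutivePairs hl.of_cons.of_cons hs

theorem eq_of_mem_consecutivePairs :
    ∀ {l : List α} {s t : Finset α} {e : α}, l.Nodup → s ∈ consecutivePairs l →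
      t ∈ consecutivePairs l → e ∈ s → e ∈ t → s = t
  | [], _, _, _, _, hs, _, _, _ => by simp [consecutivePairs] at hs
  | [_], _, _, _, _, hs, _, _, _ => by simp [consecutivePairs] at hs
  | a :: b :: l, s, t, e, hl, hs, ht, hes, het => by
    have hab : e ∈ ({a, b} : Finset α) → e ∉ l := by
      rintro he hel
      rcases Finset.mem_insert.1 he with rfl | he
      · exact (List.nodup_cons.1 hl).1 (List.mem_cons_of_mem _ hel)
      · rw [Finset.mem_singleton.1 he] at hel
        exact (List.nodup_cons.1 hl.of_cons).1 hel
    rcases List.mem_cons.1 hs with rfl | hs <;> rcases List.mem_cons.1 ht with rfl | ht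
    · rfl
    · exact absurd (mem_of_mem_consecutivePairs ht het) (hab hes)
    · exact absurd (mem_of_mem_consecutivePairs hs hes) (hab het)
    · exact eq_of_mem_consecutivePairs hl.of_cons.of_cons hs ht hes het

/-- An item of a pair that is not in `K` is dominated by the item of the previous pair that
is in `K`, or by the first item. -/
theorem sum_filter_notMem_le {w : α → ℝ} (hw : ∀ e, 0 ≤ w e) (K : Finset α) :
    ∀ l : List α, l.Pairwise (fun a b => w b ≤ w a) →
      (∀ s ∈ consecutivePairs l, ∃ e ∈ s, e ∈ K) →
      ((l.filter (· ∉ K)).map w).sum ≤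
        ((l.take 1).map w).sum + ((l.filter (· ∈ K)).map w).sum
  | [], _, _ => by simp
  | [a], _, _ => by by_cases ha : a ∈ K <;> simp [ha, hw]
  | a :: b :: l, hsort, hK => by
    have ih := sum_filter_notMem_le hw K l hsort.of_cons.of_cons
      fun s hs => hK s (List.mem_cons_of_mem _ hs)
    have hba : w b ≤ w a := List.rel_of_pairwise_cons hsort (by simp)
    have hhead : ((l.take 1).map w).sum ≤ w b := by
      cases l with
      | nil => simpa using hw b
      | cons c l => simpa using List.rel_of_pairwise_cons hsort.of_cons (by simp)
    obtain ⟨e, he, heK⟩ := hK {a, b} (by simp [consecutivePairs])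
    have hab : a ∈ K ∨ b ∈ K := by
      rcases Finset.mem_insert.1 he with rfl | he
      · exact Or.inl heK
      · exact Or.inr (Finset.mem_singleton.1 he ▸ heK)
    have ha0 := hw a
    by_cases ha : a ∈ K <;> by_cases hb : b ∈ K <;>
      simp [ha, hb] at hab ih hhead ⊢ <;> linarith

end ConsecutivePairs

/-- Hall's condition, by double counting the incidences. -/
theorem exists_injective_mem_of_card_le {ι α : Type*} [DecidableEq α] (t : ι → Finset α)
    {k : ℕ} (hk : 0 < k) (hcard : ∀ c, k ≤ (t c).card)
    (hdeg : ∀ (s : Finset ι) (a : α), (s.filter (a ∈ t ·)).card ≤ k) :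
    ∃ f : ι → α, Function.Injective f ∧ ∀ c, f c ∈ t c := by
  refine (Finset.all_card_le_biUnion_card_iff_exists_injective t).1 fun s => ?_
  refine le_of_mul_le_mul_right (Finset.card_mul_le_card_mul (fun c a => a ∈ t c)
    (fun c hc => ?_) (fun a _ => hdeg s a)) hk
  exact (hcard c).trans <| Finset.card_le_card fun a ha =>
    Finset.mem_filter.2 ⟨Finset.mem_biUnion.2 ⟨c, hc, ha⟩, ha⟩

theorem exists_antitone_list {α : Type*} [DecidableEq α] (w : α → ℝ) (s : Finset α) :
    ∃ l : List α, l.Nodup ∧ l.toFinset = s ∧ l.Pairwise (fun a b => w b ≤ w a) := by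
  let r : α → α → Prop := fun a b => w b ≤ w a
  have : Std.Total r := ⟨fun a b => le_total (w b) (w a)⟩
  have : IsTrans α r := ⟨fun _ _ _ hab hbc => le_trans hbc hab⟩
  have hperm := List.perm_insertionSort r s.toList
  refine ⟨s.toList.insertionSort r, hperm.nodup_iff.2 s.nodup_toList, ?_,
    List.pairwise_insertionSort r _⟩
  rw [List.toFinset_eq_of_perm _ _ hperm, Finset.toList_toFinset]

theorem exists_endpoint_choice_meeting_consecutivePairs {V E : Type*} [DecidableEq V]
    [DecidableEq E] (ep : E → Sym2 V) (L : V → List E) (hnd : ∀ i, (L i).Nodup)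
    (hL : ∀ i e, e ∈ L i → i ∈ ep e) :
    ∃ g : E → V, (∀ e, g e ∈ ep e) ∧
      ∀ i, ∀ s ∈ consecutivePairs (L i), ∃ e ∈ s, g e = i := by
  let ι := Σ i, {s // s ∈ consecutivePairs (L i)}
  have hdeg (s : Finset ι) (e : E) : (s.filter (e ∈ ·.2.1)).card ≤ 2 := by
    calc (s.filter (e ∈ ·.2.1)).card ≤ (ep e).toFinset.card := by
          refine Finset.card_le_card_of_injOn Sigma.fst (fun c hc => ?_) ?_
          · exact Sym2.mem_toFinset.2 (hL _ _
              (mem_of_mem_consecutivePairs c.2.2 (Finset.mem_filter.1 hc).2))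
          · rintro ⟨i, s, hs⟩ hc ⟨i', s', hs'⟩ hc' (rfl : i = i')
            obtain rfl : s = s' := eq_of_mem_consecutivePairs (hnd i) hs hs'
              (Finset.mem_filter.1 hc).2 (Finset.mem_filter.1 hc').2
            rfl
      _ ≤ 2 := by rw [Sym2.card_toFinset]; split_ifs <;> omega
  obtain ⟨f, hf, hft⟩ := exists_injective_mem_of_card_le (fun c : ι => c.2.1) two_pos
    (fun c => (card_of_mem_consecutivePairs (hnd _) c.2.2).ge) hdeg
  refine ⟨Function.extend f Sigma.fst fun e => (ep e).out.1, fun e => ?_,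
    fun i s hs => ⟨f ⟨i, s, hs⟩, hft _, hf.extend_apply _ _ _⟩⟩
  by_cases h : ∃ c, f c = e
  · obtain ⟨c, rfl⟩ := h
    rw [hf.extend_apply]
    exact hL _ _ (mem_of_mem_consecutivePairs c.2.2 (hft c))
  · rw [Function.extend_apply' _ _ _ h]
    exact Sym2.out_fst_mem _

theorem isOrientation_fiber {V E : Type} [DecidableEq V] [DecidableEq E] [Fintype E]
    (I : GraphInstance V E) (g : E → V) (hg : ∀ e, g e ∈ I.ep e) :
    IsOrientation I fun i => univ.filter (g · = i) :=
  ⟨fun i j hij => Finset.disjoint_left.2 fun e hi hj =>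
      hij ((Finset.mem_filter.1 hi).2.symm.trans (Finset.mem_filter.1 hj).2),
    fun e => ⟨g e, hg e, by simp⟩⟩

theorem exists_two_parts_disjoint {α : Type*} {d : ℕ} (hd : 3 ≤ d) {P : Fin d → Finset α}
    (hP : ∀ s t, s ≠ t → Disjoint (P s) (P t)) {S : Finset α} (hS : S.card ≤ 1) :
    ∃ a b, a ≠ b ∧ Disjoint (P a) S ∧ Disjoint (P b) S := by
  classical
  have hmeet : (univ.filter fun t => ¬Disjoint (P t) S).card ≤ 1 := by
    refine Finset.card_le_one.2 fun t ht t' ht' => ?_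
    obtain ⟨x, hxt, hxS⟩ := Finset.not_disjoint_iff.1 (Finset.mem_filter.1 ht).2
    obtain ⟨x', hxt', hxS'⟩ := Finset.not_disjoint_iff.1 (Finset.mem_filter.1 ht').2
    obtain rfl := Finset.card_le_one.1 hS x hxS x' hxS'
    by_contra hne
    exact Finset.disjoint_left.1 (hP t t' hne) hxt hxt'
  have hcard := Finset.card_filter_add_card_filter_not
    (s := (univ : Finset (Fin d))) fun t => Disjoint (P t) S
  rw [Finset.card_univ, Fintype.card_fin] at hcard
  obtain ⟨a, ha, b, hb, hab⟩ := Finset.one_lt_card.1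
    (show 1 < (univ.filter fun t => Disjoint (P t) S).card by omega)
  exact ⟨a, b, hab, (Finset.mem_filter.1 ha).2, (Finset.mem_filter.1 hb).2⟩

theorem mms_le_of_le_add_two_mul {α : Type} [DecidableEq α] [Fintype α] {v : Finset α → ℝ}
    (hv : IsAdditiveVal v) (hv0 : ∀ S, 0 ≤ v S) {d : ℕ} (hd : 3 ≤ d) {K S : Finset α}
    (hS : S.card ≤ 1) (h : v univ ≤ v S + 2 * v K) : mms v d univ ≤ v K := by
  refine Real.sSup_le ?_ (hv0 K)
  rintro x ⟨P, ⟨hP, -⟩, rfl⟩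
  obtain ⟨a, b, hab, haS, hbS⟩ := exists_two_parts_disjoint hd hP hS
  have hsub : P a ∪ P b ⊆ univ \ S := fun e he => Finset.mem_sdiff.2 ⟨Finset.mem_univ e,
    (Finset.mem_union.1 he).elim (fun h => Finset.disjoint_left.1 haS h)
      fun h => Finset.disjoint_left.1 hbS h⟩
  have hab_le : v (P a) + v (P b) ≤ v univ - v S := by
    rw [hv, hv (P b), ← Finset.sum_union (hP a b hab), hv, hv S,
      ← Finset.sum_sdiff (Finset.subset_univ S)]
    simpa using Finset.sum_le_sum_of_subset_of_nonneg hsub fun e _ _ => hv0 {e}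
  have hbdd := (Set.finite_range fun t => v (P t)).bddBelow
  linarith [ciInf_le hbdd a, ciInf_le hbdd b]

theorem sum_le_sum_take_one_add_two_mul {α : Type*} [DecidableEq α] [Fintype α] {w : α → ℝ}
    (hw : ∀ e, 0 ≤ w e) {l : List α} (hnd : l.Nodup) (hsupp : ∀ e ∉ l, w e = 0)
    (hsort : l.Pairwise fun a b => w b ≤ w a) {K : Finset α}
    (hK : ∀ s ∈ consecutivePairs l, ∃ e ∈ s, e ∈ K) :
    ∑ e, w e ≤ ∑ e ∈ (l.take 1).toFinset, w e + 2 * ∑ e ∈ K, w e := by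
  have htotal : ∑ e, w e = (l.map w).sum := by
    rw [← List.sum_toFinset w hnd]
    exact (Finset.sum_subset (Finset.subset_univ _) fun e _ he =>
      hsupp e (by simpa using he)).symm
  have hkept : ((l.filter (· ∈ K)).map w).sum ≤ ∑ e ∈ K, w e := by
    rw [← List.sum_toFinset w (hnd.filter _)]
    refine Finset.sum_le_sum_of_subset_of_nonneg (fun e he => ?_) fun e _ _ => hw e
    simpa using (List.mem_filter.1 (List.mem_toFinset.1 he)).2
  rw [htotal, List.sum_toFinset w (hnd.sublist (List.take_sublist 1 l)),
    ← List.sum_map_filter_add_sum_map_filter_not (· ∈ K)]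
  linarith [sum_filter_notMem_le hw K l hsort hK]

theorem stmt2_general {n : ℕ} {E : Type} [Fintype E] [DecidableEq E]
    (I : GraphInstance (Fin n) E)
    (hadd : ∀ i, IsAdditiveVal (I.val i)) :
    ∃ X : Fin n → Finset E, IsOrientation I X ∧
      (∀ i, mms (I.val i) 3 Finset.univ ≤ I.val i (X i)) ∧
      (3 ≤ n → ∀ i, mms (I.val i) n Finset.univ ≤ I.val i (X i)) := by
  choose L hnd hL hsort using fun i =>
    exists_antitone_list (fun e => I.val i {e}) (univ.filter (i ∈ I.ep ·))
  have hmemL (i : Fin n) (e : E) : e ∈ L i ↔ i ∈ I.ep e := by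
    simpa [hL i] using (List.mem_toFinset (l := L i) (a := e)).symm
  obtain ⟨g, hg, hmeet⟩ := exists_endpoint_choice_meeting_consecutivePairs I.ep L hnd
    fun i e => (hmemL i e).1
  have hbound (i : Fin n) {d : ℕ} (hd : 3 ≤ d) :
      mms (I.val i) d univ ≤ I.val i (univ.filter (g · = i)) := by
    refine mms_le_of_le_add_two_mul (hadd i) (I.val_nonneg i) hd
      ((List.toFinset_card_le ((L i).take 1)).trans (List.length_take_le 1 _)) ?_
    rw [hadd i, hadd i, hadd i]
    refine sum_le_sum_take_one_add_two_mul (fun e => I.val_nonneg i _) (hnd i) (fun e he => ?_)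
      (hsort i) fun s hs => (hmeet i s hs).imp fun e he => ⟨he.1, by simp [he.2]⟩
    simpa [I.val_empty] using I.graphical i e (mt (hmemL i e).2 he) ∅
  exact ⟨_, isOrientation_fiber I g hg, fun i => hbound i le_rfl, fun hn i => hbound i hn⟩

/-- In every multi-graph instance with `n ≥ 1` agents, all of whose
valuations are additive, there exists an orientation `X` with `v_i(X_i) ≥ μ_i^3` for
every agent `i` (a `1`-out-of-`3` MMS orientation); in particular, for `n ≥ 3` this
orientation satisfies `v_i(X_i) ≥ μ_i^n` for every agent `i`. -/
theorem stmt2 {n : ℕ} (hn : 1 ≤ n) {E : Type} [Fintype E] [DecidableEq E]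
    (I : GraphInstance (Fin n) E)
    (hadd : ∀ i, IsAdditiveVal (I.val i)) :
    ∃ X : Fin n → Finset E, IsOrientation I X ∧
      (∀ i, mms (I.val i) 3 Finset.univ ≤ I.val i (X i)) ∧
      (3 ≤ n → ∀ i, mms (I.val i) n Finset.univ ≤ I.val i (X i)) :=
  stmt2_general I hadd
end

section
/- Fix integers n ≥ 1, d ≥ 1 and a real α > 0. The following are equivalent: (a) every multi-graph instance with n agents all of whose valuations are XOS admits an allocation X with v_i(X_i) ≥ α·μ_i^d for every agent i; (b) for every multi-graph instance with n agents all of whose valuations are additive, and every choice of canonical 1-out-of-d MMS partitions (B_i)_{i ∈ V}, there exists an allocation X that is frugal with respect to (B_i)_{i ∈ V} and satisfies v_i(X_i) ≥ α·μ_i^d for every agent i. -/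
/- Both directions replace the instance by one with the same ground set, edges and MMS values.
From additive valuations with canonical partitions `B_i` one builds the XOS valuation
`S ↦ max_t v_i(S ∩ B_{i,t})`: an allocation for it, cut down to each agent's best part, is frugal.
Conversely, for XOS valuations with optimal partitions `P_i`, one takes on each part `P_{i,t}` a
supporting additive clause of `v_i`, rescaled to total exactly `μ_i^d`; the resulting additive
valuation has `P_i` as a canonical partition and lies below `v_i` on every subset of a part. -/

open Finset

variable {V E : Type}

section Partition

variable [DecidableEq E] {d : ℕ} {P : Fin d → Finset E} {F : Finset E}

lemma isPartitionInto_ite (t₀ : Fin d) (F : Finset E) :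
    IsPartitionInto d (fun t => if t = t₀ then F else ∅) F := by
  refine ⟨fun s t hst => ?_, ?_⟩
  · by_cases hs : s = t₀
    · have ht : t ≠ t₀ := fun ht => hst (hs.trans ht.symm)
      simp [ht]
    · simp [hs]
  · ext e
    simp only [mem_biUnion, mem_univ, true_and]
    exact ⟨fun ⟨t, ht⟩ => by split_ifs at ht <;> simp_all, fun he => ⟨t₀, by simpa⟩⟩

namespace IsPartitionInto

lemma sum_sum (hP : IsPartitionInto d P F) (w : E → ℝ) :
    ∑ t, ∑ e ∈ P t, w e = ∑ e ∈ F, w e := by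
  rw [← hP.2, sum_biUnion fun s _ t _ hst => hP.1 s t hst]

lemma exists_mem (hP : IsPartitionInto d P F) {e : E} (he : e ∈ F) : ∃ t, e ∈ P t := by
  rw [← hP.2] at he
  simpa using he

lemma eq_of_mem (hP : IsPartitionInto d P F) {e : E} {s t : Fin d} (hs : e ∈ P s)
    (ht : e ∈ P t) : s = t := by
  by_contra hst
  exact disjoint_left.1 (hP.1 s t hst) hs ht

end IsPartitionInto

end Partition

lemma IsAllocation.mono [DecidableEq E] {X Y : V → Finset E} (hX : IsAllocation X)
    (hYX : ∀ i, Y i ⊆ X i) : IsAllocation Y :=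
  fun i j hij => (hX i j hij).mono (hYX i) (hYX j)

lemma GraphInstance.val_singleton_eq_zero [DecidableEq E] (I : GraphInstance V E) {i : V} {e : E}
    (h : i ∉ I.ep e) : I.val i {e} = 0 := by
  simpa [I.val_empty] using I.graphical i e h ∅

section Mms

variable [DecidableEq E] [Fintype E] {d : ℕ} {F : Finset E}

lemma finite_mms_candidates (v : Finset E → ℝ) (d : ℕ) (F : Finset E) :
    {x | ∃ P : Fin d → Finset E, IsPartitionInto d P F ∧ x = ⨅ t, v (P t)}.Finite :=
  (Set.finite_range fun P : Fin d → Finset E => ⨅ t, v (P t)).subset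
    (by rintro x ⟨P, _, rfl⟩; exact ⟨P, rfl⟩)

lemma iInf_le_mms (v : Finset E → ℝ) {P : Fin d → Finset E} (hP : IsPartitionInto d P F) :
    ⨅ t, v (P t) ≤ mms v d F :=
  le_csSup (finite_mms_candidates v d F).bddAbove ⟨P, hP, rfl⟩

lemma exists_isPartitionInto_iInf_eq_mms (v : Finset E → ℝ) (hd : 0 < d) (F : Finset E) :
    ∃ P : Fin d → Finset E, IsPartitionInto d P F ∧ ⨅ t, v (P t) = mms v d F := by
  obtain ⟨P, hP, h⟩ := Set.Nonempty.csSup_mem (s := {x | ∃ P : Fin d → Finset E,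
      IsPartitionInto d P F ∧ x = ⨅ t, v (P t)})
    ⟨_, _, isPartitionInto_ite ⟨0, hd⟩ F, rfl⟩ (finite_mms_candidates v d F)
  exact ⟨P, hP, h.symm⟩

lemma mms_mono {v w : Finset E → ℝ} (hd : 0 < d) (hvw : ∀ S, v S ≤ w S) :
    mms v d F ≤ mms w d F := by
  have : Nonempty (Fin d) := ⟨⟨0, hd⟩⟩
  obtain ⟨P, hP, hPv⟩ := exists_isPartitionInto_iInf_eq_mms v hd F
  rw [← hPv]
  exact (ciInf_mono (Finite.bddBelow_range _) fun t => hvw (P t)).trans (iInf_le_mms w hP)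

lemma mms_nonneg {v : Finset E → ℝ} (hd : 0 < d) (hv : ∀ S, 0 ≤ v S) : 0 ≤ mms v d F := by
  obtain ⟨P, -, hPv⟩ := exists_isPartitionInto_iInf_eq_mms v hd F
  exact hPv ▸ Real.iInf_nonneg fun t => hv (P t)

lemma mms_sum_le {w : E → ℝ} {μ : ℝ} (hd : 0 < d) (htot : ∑ e ∈ F, w e = d * μ) :
    mms (fun S => ∑ e ∈ S, w e) d F ≤ μ := by
  obtain ⟨P, hP, hPv⟩ := exists_isPartitionInto_iInf_eq_mms (fun S => ∑ e ∈ S, w e) hd F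
  rw [← hPv]
  have hmin : ∑ _t : Fin d, ⨅ t, ∑ e ∈ P t, w e ≤ ∑ t, ∑ e ∈ P t, w e :=
    sum_le_sum fun t _ => ciInf_le (Finite.bddBelow_range _) t
  rw [hP.sum_sum, htot, sum_const, card_univ, Fintype.card_fin, nsmul_eq_mul] at hmin
  exact le_of_mul_le_mul_left hmin (by exact_mod_cast hd)

lemma mms_sum_eq {w : E → ℝ} {μ : ℝ} {P : Fin d → Finset E} (hd : 0 < d)
    (hP : IsPartitionInto d P F) (hw : ∀ t, ∑ e ∈ P t, w e = μ) :
    mms (fun S => ∑ e ∈ S, w e) d F = μ := by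
  have : Nonempty (Fin d) := ⟨⟨0, hd⟩⟩
  refine le_antisymm (mms_sum_le hd ?_) ?_
  · simp [← hP.sum_sum, hw]
  · simpa [hw] using iInf_le_mms (fun S => ∑ e ∈ S, w e) hP

end Mms

section Valuations

variable [DecidableEq E]

lemma IsAdditiveVal.sum_ite_mem_eq {v : Finset E → ℝ} (hv : IsAdditiveVal v) (S B : Finset E) :
    ∑ e ∈ S, (if e ∈ B then v {e} else 0) = v (S ∩ B) := by
  rw [sum_ite_mem, hv (S ∩ B)]

lemma IsXOSVal.exists_additive_le_sum_eq {v : Finset E → ℝ} (hv : IsXOSVal v) {S : Finset E}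
    {μ : ℝ} (hμ : 0 ≤ μ) (hμS : μ ≤ v S) :
    ∃ w : E → ℝ, (∀ e, 0 ≤ w e) ∧ (∀ T, ∑ e ∈ T, w e ≤ v T) ∧ ∑ e ∈ S, w e = μ := by
  obtain ⟨A, hA, hA0, hvA⟩ := hv
  obtain ⟨a, haA, ha⟩ := exists_mem_eq_sup' hA fun a => ∑ e ∈ S, a e
  have hvS : v S = ∑ e ∈ S, a e := (hvA S).trans ha
  -- no case split for `v S = 0`: then `μ = 0`, and also `μ / v S = 0` since `μ / 0 = 0`
  have hc0 : 0 ≤ μ / v S := div_nonneg hμ (hμ.trans hμS)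
  have hc1 : μ / v S ≤ 1 := div_le_one_of_le₀ hμS (hμ.trans hμS)
  refine ⟨fun e => μ / v S * a e, fun e => mul_nonneg hc0 (hA0 a haA e), fun T => ?_, ?_⟩
  · calc ∑ e ∈ T, μ / v S * a e = μ / v S * ∑ e ∈ T, a e := (mul_sum ..).symm
      _ ≤ ∑ e ∈ T, a e := mul_le_of_le_one_left (sum_nonneg fun e _ => hA0 a haA e) hc1
      _ ≤ v T := hvA T ▸ le_sup' (fun a => ∑ e ∈ T, a e) haA
  · rw [← mul_sum, ← hvS]
    rcases eq_or_ne (v S) 0 with h | h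
    · simp [h, le_antisymm (h ▸ hμS) hμ]
    · exact div_mul_cancel₀ μ h

end Valuations

namespace GraphInstance

variable [DecidableEq E] {ι : Type} [Fintype ι] [Nonempty ι]

def ofClauses (ep : E → Sym2 V) (a : V → ι → E → ℝ) (ha : ∀ i t e, 0 ≤ a i t e)
    (hsupp : ∀ i t e, i ∉ ep e → a i t e = 0) : GraphInstance V E where
  ep := ep
  val i S := univ.sup' univ_nonempty fun t => ∑ e ∈ S, a i t e
  val_nonneg i S := (sum_nonneg fun e _ => ha i _ e).trans
    (le_sup' (fun t => ∑ e ∈ S, a i t e) (mem_univ (Classical.arbitrary ι)))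
  val_empty i := by simp
  val_mono i S T hST := sup'_mono_fun fun t _ =>
    sum_le_sum_of_subset_of_nonneg hST fun e _ _ => ha i t e
  graphical i e h S := by
    simp only [sum_insert_of_eq_zero_if_notMem fun _ => hsupp i _ e h]

variable {ep : E → Sym2 V} {a : V → ι → E → ℝ} {ha : ∀ i t e, 0 ≤ a i t e}
  {hsupp : ∀ i t e, i ∉ ep e → a i t e = 0}

lemma ofClauses_val (i : V) (S : Finset E) :
    (ofClauses ep a ha hsupp).val i S = univ.sup' univ_nonempty fun t => ∑ e ∈ S, a i t e :=
  rfl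

lemma isXOSVal_ofClauses (i : V) : IsXOSVal ((ofClauses ep a ha hsupp).val i) := by
  classical
  refine ⟨univ.image (a i), univ_nonempty.image _, ?_, fun S => ?_⟩
  · simp only [mem_image, mem_univ, true_and, forall_exists_index, forall_apply_eq_imp_iff]
    exact ha i
  · rw [ofClauses_val, sup'_image]
    rfl

lemma ofClauses_val_of_unique [Unique ι] (i : V) (S : Finset E) :
    (ofClauses ep a ha hsupp).val i S = ∑ e ∈ S, a i default e := by
  simp [ofClauses_val, univ_unique]

lemma isAdditiveVal_ofClauses [Unique ι] (i : V) :
    IsAdditiveVal ((ofClauses ep a ha hsupp).val i) := fun S => by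
  simp only [ofClauses_val_of_unique, sum_singleton]

end GraphInstance

section Reductions

variable [DecidableEq E] [Fintype E] {d : ℕ}

lemma exists_xos_of_isCanonicalPartition (hd : 0 < d) (I : GraphInstance V E)
    (hadd : ∀ i, IsAdditiveVal (I.val i)) (B : V → Fin d → Finset E)
    (hB : ∀ i, IsCanonicalPartition (I.val i) d (B i)) :
    ∃ I' : GraphInstance V E, (∀ i, IsXOSVal (I'.val i)) ∧
      (∀ i, mms (I'.val i) d univ = mms (I.val i) d univ) ∧
      ∀ i S, ∃ t, I'.val i S = I.val i (S ∩ B i t) := by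
  have : Nonempty (Fin d) := ⟨⟨0, hd⟩⟩
  let I' := GraphInstance.ofClauses I.ep (fun i t e => if e ∈ B i t then I.val i {e} else 0)
    (fun i t e => by split_ifs <;> simp [I.val_nonneg])
    (fun i t e h => by simp [I.val_singleton_eq_zero h])
  have hI' : ∀ i S, I'.val i S = univ.sup' univ_nonempty fun t => I.val i (S ∩ B i t) :=
    fun i S => by simp only [I', GraphInstance.ofClauses_val, (hadd i).sum_ite_mem_eq]
  have hle : ∀ i S, I'.val i S ≤ I.val i S := fun i S => by
    rw [hI']
    exact sup'_le _ _ fun t _ => I.val_mono i inter_subset_left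
  have hB_le : ∀ i t, I.val i (B i t) ≤ I'.val i (B i t) := fun i t => by
    rw [hI']
    have h := le_sup' (fun t' => I.val i (B i t ∩ B i t')) (mem_univ t)
    rwa [inter_self] at h
  refine ⟨I', GraphInstance.isXOSVal_ofClauses, fun i => ?_, fun i S => ?_⟩
  · refine le_antisymm (mms_mono hd (hle i)) ?_
    rw [← (hB i).2]
    exact (ciInf_mono (Finite.bddBelow_range _) (hB_le i)).trans (iInf_le_mms _ (hB i).1)
  · obtain ⟨t, -, ht⟩ := exists_mem_eq_sup' univ_nonempty fun t => I.val i (S ∩ B i t)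
    exact ⟨t, (hI' i S).trans ht⟩

lemma IsXOSVal.exists_additive_of_isPartitionInto {v : Finset E → ℝ} (hv : IsXOSVal v)
    {P : Fin d → Finset E} (hP : IsPartitionInto d P univ) {μ : ℝ} (hμ : 0 ≤ μ)
    (hμP : ∀ t, μ ≤ v (P t)) :
    ∃ w : E → ℝ, (∀ e, 0 ≤ w e) ∧ (∀ t, ∑ e ∈ P t, w e = μ) ∧
      ∀ t, ∀ S ⊆ P t, ∑ e ∈ S, w e ≤ v S := by
  choose w hw0 hwv hwP using fun t => hv.exists_additive_le_sum_eq hμ (hμP t)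
  choose τ hτ using fun e => hP.exists_mem (mem_univ e)
  have hsum : ∀ t, ∀ S ⊆ P t, ∑ e ∈ S, w (τ e) e = ∑ e ∈ S, w t e := fun t S hS =>
    sum_congr rfl fun e he => by rw [hP.eq_of_mem (hτ e) (hS he)]
  exact ⟨fun e => w (τ e) e, fun e => hw0 _ e, fun t => (hsum t _ subset_rfl).trans (hwP t),
    fun t S hS => (hsum t S hS).trans_le (hwv t S)⟩

lemma exists_additive_of_isXOSVal (hd : 0 < d) (I : GraphInstance V E)
    (hxos : ∀ i, IsXOSVal (I.val i)) :
    ∃ (I' : GraphInstance V E) (P : V → Fin d → Finset E), (∀ i, IsAdditiveVal (I'.val i)) ∧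
      (∀ i, IsCanonicalPartition (I'.val i) d (P i)) ∧
      (∀ i, mms (I'.val i) d univ = mms (I.val i) d univ) ∧
      ∀ i t S, S ⊆ P i t → I'.val i S ≤ I.val i S := by
  have : Nonempty (Fin d) := ⟨⟨0, hd⟩⟩
  choose P hP hPμ using fun i => exists_isPartitionInto_iInf_eq_mms (I.val i) hd univ
  have hμP : ∀ i t, mms (I.val i) d univ ≤ I.val i (P i t) := fun i t =>
    hPμ i ▸ ciInf_le (Finite.bddBelow_range _) t
  choose w hw0 hwP hwv using fun i => (hxos i).exists_additive_of_isPartitionInto (hP i)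
    (mms_nonneg hd (I.val_nonneg i)) (hμP i)
  have hsupp : ∀ i e, i ∉ I.ep e → w i e = 0 := fun i e h => by
    obtain ⟨t, ht⟩ := (hP i).exists_mem (mem_univ e)
    have := hwv i t {e} (singleton_subset_iff.2 ht)
    rw [sum_singleton, I.val_singleton_eq_zero h] at this
    exact le_antisymm this (hw0 i e)
  let I' := GraphInstance.ofClauses (ι := Unit) I.ep (fun i _ e => w i e)
    (fun i _ e => hw0 i e) (fun i _ e => hsupp i e)
  have hI' : ∀ i S, I'.val i S = ∑ e ∈ S, w i e := GraphInstance.ofClauses_val_of_unique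
  have hmms : ∀ i, mms (I'.val i) d univ = mms (I.val i) d univ := fun i => by
    rw [show I'.val i = _ from funext (hI' i)]
    exact mms_sum_eq hd (hP i) (hwP i)
  refine ⟨I', P, GraphInstance.isAdditiveVal_ofClauses, fun i => ⟨hP i, ?_⟩, hmms,
    fun i t S hS => (hI' i S).trans_le (hwv i t S hS)⟩
  simp only [hmms, hI', hwP, ciInf_const]

end Reductions

theorem stmt6_general (n d : ℕ) (hd : 1 ≤ d) (α : ℝ) :
    (∀ (E : Type) [Fintype E] [DecidableEq E] (I : GraphInstance (Fin n) E),
      (∀ i, IsXOSVal (I.val i)) →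
      ∃ X : Fin n → Finset E, IsAllocation X ∧
        ∀ i, α * mms (I.val i) d Finset.univ ≤ I.val i (X i))
    ↔
    (∀ (E : Type) [Fintype E] [DecidableEq E] (I : GraphInstance (Fin n) E),
      (∀ i, IsAdditiveVal (I.val i)) →
      ∀ B : Fin n → Fin d → Finset E,
        (∀ i, IsCanonicalPartition (I.val i) d (B i)) →
        ∃ X : Fin n → Finset E, IsAllocation X ∧
          (∀ i, ∃ t : Fin d, X i ⊆ B i t) ∧
          ∀ i, α * mms (I.val i) d Finset.univ ≤ I.val i (X i)) := by
  constructor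
  · intro hxos E _ _ I hadd B hB
    obtain ⟨I', hI'xos, hmms, hrestrict⟩ := exists_xos_of_isCanonicalPartition hd I hadd B hB
    obtain ⟨X, hX, hXval⟩ := hxos E I' hI'xos
    choose t ht using fun i => hrestrict i (X i)
    refine ⟨fun i => X i ∩ B i (t i), hX.mono fun i => inter_subset_left,
      fun i => ⟨t i, inter_subset_right⟩, fun i => ?_⟩
    rw [← ht, ← hmms]
    exact hXval i
  · intro hadd E _ _ I hxos
    obtain ⟨I', P, hI'add, hP, hmms, hle⟩ := exists_additive_of_isXOSVal hd I hxos
    obtain ⟨X, hX, hfrugal, hXval⟩ := hadd E I' hI'add P hP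
    refine ⟨X, hX, fun i => ?_⟩
    obtain ⟨t, ht⟩ := hfrugal i
    exact (hmms i ▸ hXval i).trans (hle i t (X i) ht)

/-- Fix `n ≥ 1`, `d ≥ 1` and a real `α > 0`. The following are
equivalent: (a) every multi-graph instance with `n` XOS agents admits an allocation `X`
with `v_i(X_i) ≥ α·μ_i^d` for every agent `i`; (b) for every multi-graph instance with
`n` additive agents and every choice of canonical 1-out-of-`d` MMS partitions
`(B_i)_i`, there is an allocation `X` frugal with respect to `(B_i)_i` with
`v_i(X_i) ≥ α·μ_i^d` for every agent `i`. -/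
theorem stmt6 (n d : ℕ) (hn : 1 ≤ n) (hd : 1 ≤ d) (α : ℝ) (hα : 0 < α) :
    (∀ (E : Type) [Fintype E] [DecidableEq E] (I : GraphInstance (Fin n) E),
      (∀ i, IsXOSVal (I.val i)) →
      ∃ X : Fin n → Finset E, IsAllocation X ∧
        ∀ i, α * mms (I.val i) d Finset.univ ≤ I.val i (X i))
    ↔
    (∀ (E : Type) [Fintype E] [DecidableEq E] (I : GraphInstance (Fin n) E),
      (∀ i, IsAdditiveVal (I.val i)) →
      ∀ B : Fin n → Fin d → Finset E,
        (∀ i, IsCanonicalPartition (I.val i) d (B i)) →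
        ∃ X : Fin n → Finset E, IsAllocation X ∧
          (∀ i, ∃ t : Fin d, X i ⊆ B i t) ∧
          ∀ i, α * mms (I.val i) d Finset.univ ≤ I.val i (X i)) :=
  stmt6_general n d hd α
end

section
/- For every integer d ≥ 1, every multi-graph instance with n = 2 agents whose valuations are both XOS, and every choice of canonical 1-out-of-d MMS partitions (B_1, B_2), there exists an allocation X that is frugal with respect to (B_1, B_2) and satisfies v_i(X_i) ≥ (1 − 1/d)·μ_i^d for each agent i ∈ {1, 2}. -/
/-!
Agent 1 keeps one of her own MMS bundles `S = B₁ s`, minus the part `B₀ t` that agent 0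
receives. Taking an additive function `a` from the XOS representation that supports `v₁` at
`S`, the `d` sets `S ∩ B₀ t` split `S`, so one of them carries at most a `1/d` share of
`a(S) = v₁(S) ≥ μ₁`; choosing that `t` leaves agent 1 with `a(S \ B₀ t) ≥ (1 - 1/d) μ₁`,
while agent 0 gets a whole bundle of her canonical partition, worth at least `μ₀`.
-/

open Finset

variable {V E : Type}

section

variable [DecidableEq E]

theorem IsPartitionInto.sum_eq_sum_inter {d : ℕ} {P : Fin d → Finset E} {F S : Finset E}
    (hP : IsPartitionInto d P F) (hS : S ⊆ F) (a : E → ℝ) :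
    ∑ e ∈ S, a e = ∑ t, ∑ e ∈ S ∩ P t, a e := by
  obtain ⟨hdisj, hcover⟩ := hP
  rw [← sum_biUnion fun s _ t _ hst => (hdisj s t hst).mono inter_subset_right inter_subset_right,
    ← inter_biUnion, hcover, inter_eq_left.mpr hS]

theorem IsPartitionInto.exists_sum_inter_le {d : ℕ} (hd : 0 < d) {P : Fin d → Finset E}
    {F S : Finset E} (hP : IsPartitionInto d P F) (hS : S ⊆ F) (a : E → ℝ) :
    ∃ t, ∑ e ∈ S ∩ P t, a e ≤ (∑ e ∈ S, a e) / d := by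
  have hdR : (d : ℝ) ≠ 0 := by positivity
  obtain ⟨t, -, ht⟩ := exists_le_of_sum_le (univ_nonempty_iff.mpr ⟨⟨0, hd⟩⟩)
    (f := fun t => ∑ e ∈ S ∩ P t, a e) (g := fun _ => (∑ e ∈ S, a e) / d) (by
      simp [← hP.sum_eq_sum_inter hS a, mul_div_cancel₀ _ hdR])
  exact ⟨t, ht⟩

theorem IsXOSVal.exists_supporting_additive {v : Finset E → ℝ} (hv : IsXOSVal v)
    (S : Finset E) : ∃ a : E → ℝ, v S = ∑ e ∈ S, a e ∧ ∀ T, ∑ e ∈ T, a e ≤ v T := by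
  obtain ⟨A, hA, -, hvA⟩ := hv
  obtain ⟨a, haA, ha⟩ := exists_mem_eq_sup' hA fun a => ∑ e ∈ S, a e
  exact ⟨a, (hvA S).trans ha, fun T => (hvA T).symm ▸ le_sup' (fun a => ∑ e ∈ T, a e) haA⟩

theorem IsXOSVal.exists_le_val_sdiff {v : Finset E → ℝ} (hv : IsXOSVal v) {d : ℕ} (hd : 0 < d)
    {P : Fin d → Finset E} {F S : Finset E} (hP : IsPartitionInto d P F) (hS : S ⊆ F) :
    ∃ t, (1 - 1 / (d : ℝ)) * v S ≤ v (S \ P t) := by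
  obtain ⟨a, haS, ha⟩ := hv.exists_supporting_additive S
  obtain ⟨t, ht⟩ := hP.exists_sum_inter_le hd hS a
  refine ⟨t, ?_⟩
  calc (1 - 1 / (d : ℝ)) * v S = ∑ e ∈ S, a e - (∑ e ∈ S, a e) / d := by rw [haS]; ring
    _ ≤ ∑ e ∈ S, a e - ∑ e ∈ S ∩ P t, a e := by linarith
    _ = ∑ e ∈ S \ P t, a e := by
      rw [← sdiff_inter_self_left, sum_sdiff_eq_sub inter_subset_left]
    _ ≤ v (S \ P t) := ha _

section Canonical

variable [Fintype E] {v : Finset E → ℝ} {d : ℕ} {B : Fin d → Finset E}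

theorem IsCanonicalPartition.mms_le (hB : IsCanonicalPartition v d B) (t : Fin d) :
    mms v d univ ≤ v (B t) :=
  hB.2 ▸ ciInf_le (Set.finite_range _).bddBelow t

theorem IsCanonicalPartition.mms_nonneg (hB : IsCanonicalPartition v d B)
    (hv : ∀ S, 0 ≤ v S) : 0 ≤ mms v d univ :=
  hB.2 ▸ Real.iInf_nonneg fun t => hv (B t)

end Canonical

end

/-- For every `d ≥ 1`, every multi-graph instance with `n = 2` XOS
agents, and every choice of canonical 1-out-of-`d` MMS partitions `(B_1, B_2)`, there
exists an allocation `X` frugal with respect to `(B_1, B_2)` with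
`v_i(X_i) ≥ (1 − 1/d)·μ_i^d` for each agent `i`. -/
theorem stmt7 (d : ℕ) (hd : 1 ≤ d) {E : Type} [Fintype E] [DecidableEq E]
    (I : GraphInstance (Fin 2) E) (hxos : ∀ i, IsXOSVal (I.val i))
    (B : Fin 2 → Fin d → Finset E)
    (hB : ∀ i, IsCanonicalPartition (I.val i) d (B i)) :
    ∃ X : Fin 2 → Finset E, IsAllocation X ∧
      (∀ i, ∃ t : Fin d, X i ⊆ B i t) ∧
      ∀ i, (1 - 1 / (d : ℝ)) * mms (I.val i) d Finset.univ ≤ I.val i (X i) := by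
  let s : Fin d := ⟨0, hd⟩
  obtain ⟨t, ht⟩ := (hxos 1).exists_le_val_sdiff hd (hB 0).1 (subset_univ (B 1 s))
  have hshare : 1 - 1 / (d : ℝ) ≤ 1 := by simp
  refine ⟨![B 0 t, B 1 s \ B 0 t], ?_, ?_, ?_⟩
  · intro i j hij
    fin_cases i <;> fin_cases j <;> simp_all [disjoint_sdiff, sdiff_disjoint]
  · intro i
    fin_cases i
    exacts [⟨t, subset_rfl⟩, ⟨s, sdiff_subset⟩]
  · intro i
    fin_cases i
    · calc (1 - 1 / (d : ℝ)) * mms (I.val 0) d univ ≤ mms (I.val 0) d univ :=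
            mul_le_of_le_one_left ((hB 0).mms_nonneg (I.val_nonneg 0)) hshare
        _ ≤ I.val 0 (B 0 t) := (hB 0).mms_le t
    · calc (1 - 1 / (d : ℝ)) * mms (I.val 1) d univ ≤ (1 - 1 / (d : ℝ)) * I.val 1 (B 1 s) := by
            gcongr
            · simp [inv_le_one_of_one_le₀ (by exact_mod_cast hd : (1 : ℝ) ≤ d)]
            · exact (hB 1).mms_le s
        _ ≤ I.val 1 (B 1 s \ B 0 t) := ht
end

section
/- For every integer n ≥ 2, every integer d ≥ 1 and every real ε > 0, there exists a multi-graph instance with n agents whose valuations are all XOS such that no allocation X satisfies v_i(X_i) ≥ (1 − 1/Δ_n(d) + ε)·μ_i^d for all agents i, where Δ_n(d) = ⌈(n−1)d/(2(n−2))⌉ if n is odd and Δ_n(d) = ⌈nd/(2(n−1))⌉ if n is even. -/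
open Finset

variable {V E : Type}

/-!
Let `N` be the largest even number `≤ n` and `D = Δ_n(d)`, so that `N * d ≤ 2 * (N - 1) * D`.
Split the agents `0, …, N - 1` into a binary tree by repeated halving. Each of its `N - 1`
internal nodes carries a `D × D` grid of items; an item joins the agent owning its row, on the
left of the node, to the agent owning its column, on the right. By Hall's theorem every agent
`ℓ` receives `d` distinct rows or columns at ancestors of `ℓ`, on `ℓ`'s side: these are its
groups, and the count works because the balanced root leaves no overflow to either half.
Valuing a bundle by the largest part of a single group it contains is XOS with `μ^d = D` (an
agent left out of the tree, when `n` is odd, values everything at `0`), and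
`(1 - 1/D + ε) * D > D - 1` forces each agent of the tree to receive a whole group. Mark a node
when some received group is a row there, and walk down from the root, going right at marked
nodes and left at the others: the agent reached received a column at a marked node, and that
column meets the marked row.
-/

section GroupValuation

variable [DecidableEq E] {ι : Type*} [Fintype ι]

noncomputable def groupVal (G : ι → Finset E) (S : Finset E) : ℝ :=
  (univ.sup fun j => #(S ∩ G j) : ℕ)

variable {G : ι → Finset E}

theorem groupVal_nonneg (S : Finset E) : 0 ≤ groupVal G S := Nat.cast_nonneg _

theorem groupVal_empty : groupVal G ∅ = 0 := by simp [groupVal]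

theorem groupVal_mono {S T : Finset E} (h : S ⊆ T) : groupVal G S ≤ groupVal G T := by
  unfold groupVal
  exact_mod_cast sup_mono_fun fun j _ => card_le_card (inter_subset_inter_right h)

theorem groupVal_insert {e : E} (he : ∀ j, e ∉ G j) (S : Finset E) :
    groupVal G (insert e S) = groupVal G S := by
  simp [groupVal, insert_inter_of_notMem (he _)]

theorem card_inter_le_groupVal (S : Finset E) (j : ι) : (#(S ∩ G j) : ℝ) ≤ groupVal G S :=
  Nat.cast_le.2 (le_sup (f := fun j => #(S ∩ G j)) (mem_univ j))

theorem groupVal_le {D : ℕ} (hcard : ∀ j, #(G j) = D) (S : Finset E) : groupVal G S ≤ D :=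
  Nat.cast_le.2 (Finset.sup_le fun j _ => hcard j ▸ card_le_card inter_subset_right)

theorem isXOSVal_groupVal [Nonempty ι] (G : ι → Finset E) : IsXOSVal (groupVal G) := by
  classical
  refine ⟨univ.image fun j e => if e ∈ G j then 1 else 0, univ_nonempty.image _, ?_,
    fun S => ?_⟩
  · simp only [mem_image, mem_univ, true_and, forall_exists_index, forall_apply_eq_imp_iff]
    intro j e; split_ifs <;> norm_num
  · rw [sup'_image, groupVal, ← sup'_eq_sup univ_nonempty, Nat.cast_finsetSup']
    refine sup'_congr _ rfl fun j _ => ?_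
    simp

theorem exists_subset_of_sub_one_lt_groupVal [Nonempty ι] {D : ℕ} (hcard : ∀ j, #(G j) = D)
    {S : Finset E} (h : (D : ℝ) - 1 < groupVal G S) : ∃ j, G j ⊆ S := by
  obtain ⟨j, -, hj⟩ := exists_mem_eq_sup univ univ_nonempty fun j => #(S ∩ G j)
  refine ⟨j, inter_eq_right.1 (eq_of_subset_of_card_le inter_subset_right ?_)⟩
  rw [groupVal, hj] at h
  rw [hcard]
  exact Nat.lt_succ_iff.1 (by exact_mod_cast (by linarith : (D : ℝ) < #(S ∩ G j) + 1))

end GroupValuation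

section MaximinShare

variable [DecidableEq E] {d : ℕ} {v : Finset E → ℝ} {F : Finset E}

theorem le_mms [Fintype E] {P : Fin d → Finset E} (hP : IsPartitionInto d P F) :
    ⨅ t, v (P t) ≤ mms v d F :=
  le_csSup ((Set.finite_range fun P : Fin d → Finset E => ⨅ t, v (P t)).subset
    (by rintro _ ⟨P, -, rfl⟩; exact ⟨P, rfl⟩)).bddAbove ⟨P, hP, rfl⟩

theorem mms_le [NeZero d] {B : ℝ} (hB : 0 ≤ B) (h : ∀ S, v S ≤ B) : mms v d F ≤ B :=
  Real.sSup_le (by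
    rintro _ ⟨P, -, rfl⟩
    exact (ciInf_le (Finite.bddBelow_range _) 0).trans (h _)) hB

theorem isPartitionInto_fibers [Fintype E] (g : E → Fin d) :
    IsPartitionInto d (fun j => univ.filter (g · = j)) univ :=
  ⟨fun _ _ hst => disjoint_filter.2 fun _ _ h₁ h₂ => hst (h₁.symm.trans h₂),
    eq_univ_of_forall fun e => mem_biUnion.2 ⟨g e, mem_univ _, by simp⟩⟩

theorem mms_groupVal [Fintype E] [NeZero d] {G : Fin d → Finset E} {D : ℕ}
    (hdisj : Pairwise fun j j' => Disjoint (G j) (G j')) (hcard : ∀ j, #(G j) = D) :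
    mms (groupVal G) d univ = D := by
  refine le_antisymm (mms_le (Nat.cast_nonneg D) (groupVal_le hcard)) ?_
  let g : E → Fin d := fun e => if h : ∃ j, e ∈ G j then h.choose else 0
  have hg : ∀ j, G j ⊆ univ.filter (g · = j) := by
    intro j e he
    have h : ∃ j, e ∈ G j := ⟨j, he⟩
    simp only [mem_filter, mem_univ, true_and, g, dif_pos h]
    by_contra hne
    exact disjoint_left.1 (hdisj hne) h.choose_spec he
  refine le_trans (le_ciInf fun j => ?_) (le_mms (isPartitionInto_fibers g))
  calc (D : ℝ) = #(univ.filter (g · = j) ∩ G j) := by rw [inter_eq_right.2 (hg j), hcard]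
    _ ≤ _ := card_inter_le_groupVal _ j

end MaximinShare

noncomputable def GraphInstance.ofGroups [DecidableEq E] {ι : Type*} [Fintype ι]
    (ep : E → Sym2 V) (G : V → ι → Finset E) (hG : ∀ i j e, e ∈ G i j → i ∈ ep e) :
    GraphInstance V E where
  ep := ep
  val i := groupVal (G i)
  val_nonneg _ := groupVal_nonneg
  val_empty _ := groupVal_empty
  val_mono _ _ _ := groupVal_mono
  graphical i e he := groupVal_insert fun j hj => he (hG i j e hj)

theorem natCast_sub_one_lt_mul {ε : ℝ} (hε : 0 < ε) (D : ℕ) :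
    (D : ℝ) - 1 < (1 - 1 / (D : ℝ) + ε) * D := by
  rcases Nat.eq_zero_or_pos D with rfl | hD
  · norm_num
  · have hD' : (0 : ℝ) < D := by exact_mod_cast hD
    rw [add_mul, sub_mul, one_mul, one_div_mul_cancel hD'.ne']
    linarith [mul_pos hε hD']

theorem exists_xos_instance_of_groups [DecidableEq E] [Fintype E] {W : Type*} {d D : ℕ}
    [NeZero d] (f : W ↪ V) (ep : E → Sym2 W) (G : W → Fin d → Finset E)
    (hcard : ∀ i j, #(G i j) = D)
    (hdisj : ∀ i, Pairwise fun j j' => Disjoint (G i j) (G i j'))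
    (hep : ∀ i j e, e ∈ G i j → i ∈ ep e)
    (hmeet : ∀ choice : W → Fin d,
      ∃ i i', i ≠ i' ∧ ¬ Disjoint (G i (choice i)) (G i' (choice i')))
    {ε : ℝ} (hε : 0 < ε) :
    ∃ I : GraphInstance V E, (∀ i, IsXOSVal (I.val i)) ∧
      ¬ ∃ X : V → Finset E, IsAllocation X ∧
        ∀ i, (1 - 1 / (D : ℝ) + ε) * mms (I.val i) d univ ≤ I.val i (X i) := by
  let G' : V → Fin d → Finset E := Function.extend f G fun _ _ => ∅
  have hG' : ∀ w, G' (f w) = G w := f.injective.extend_apply _ _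
  have hep' : ∀ i j e, e ∈ G' i j → i ∈ (ep e).map f := by
    intro i j e he
    by_cases hi : ∃ w, f w = i
    · obtain ⟨w, rfl⟩ := hi
      rw [hG'] at he
      exact Sym2.mem_map.2 ⟨w, hep w j e he, rfl⟩
    · simp [G', Function.extend_apply' _ _ _ hi] at he
  refine ⟨.ofGroups (fun e => (ep e).map f) G' hep', fun i => isXOSVal_groupVal _, ?_⟩
  rintro ⟨X, hX, hgood⟩
  have hfull : ∀ w, ∃ j, G w j ⊆ X (f w) := by
    intro w
    have h := hgood (f w)
    simp only [GraphInstance.ofGroups, hG', mms_groupVal (hdisj w) (hcard w)] at h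
    exact exists_subset_of_sub_one_lt_groupVal (hcard w)
      ((natCast_sub_one_lt_mul hε D).trans_le h)
  choose choice hchoice using hfull
  obtain ⟨i, i', hne, hmeet⟩ := hmeet choice
  exact hmeet ((hX _ _ (f.injective.ne hne)).mono (hchoice i) (hchoice i'))

theorem card_biUnion_insert {α β : Type*} [DecidableEq β] {s : Finset α} {t : α → Finset β}
    {b : β} (hs : s.Nonempty) (hb : ∀ a ∈ s, b ∉ t a) :
    #(s.biUnion fun a => insert b (t a)) = #(s.biUnion t) + 1 := by
  have : (s.biUnion fun a => insert b (t a)) = insert b (s.biUnion t) := by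
    ext x; simp only [mem_biUnion, mem_insert]
    obtain ⟨a, ha⟩ := hs
    grind
  rw [this, card_insert_of_notMem (by simpa using hb)]

namespace HalvingTree

/-- A node of the halving tree on `[a, b)`, splitting some `[x, y)` at `(x + y) / 2`, is named by
this split point `c`; `(c, s)` is an ancestor of the leaf `ℓ` on whose side `s` (left is `true`)
`ℓ` lies. -/
def ancestors (a b ℓ : ℕ) : Finset (ℕ × Bool) :=
  if b - a < 2 then ∅
  else if ℓ < (a + b) / 2 then insert ((a + b) / 2, true) (ancestors a ((a + b) / 2) ℓ)
  else insert ((a + b) / 2, false) (ancestors ((a + b) / 2) b ℓ)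
termination_by b - a

theorem ancestors_of_lt_two {a b : ℕ} (h : b - a < 2) (ℓ : ℕ) : ancestors a b ℓ = ∅ := by
  rw [ancestors, if_pos h]

theorem ancestors_of_lt {a b ℓ : ℕ} (h : 2 ≤ b - a) (hℓ : ℓ < (a + b) / 2) :
    ancestors a b ℓ = insert ((a + b) / 2, true) (ancestors a ((a + b) / 2) ℓ) := by
  rw [ancestors, if_neg (by omega), if_pos hℓ]

theorem ancestors_of_le {a b ℓ : ℕ} (h : 2 ≤ b - a) (hℓ : (a + b) / 2 ≤ ℓ) :
    ancestors a b ℓ = insert ((a + b) / 2, false) (ancestors ((a + b) / 2) b ℓ) := by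
  rw [ancestors, if_neg (by omega), if_neg (by omega)]

theorem mem_ancestors {a b ℓ c : ℕ} {s : Bool} (h : (c, s) ∈ ancestors a b ℓ) :
    a < c ∧ c < b ∧ s = decide (ℓ < c) := by
  induction a, b using ancestors.induct ℓ with
  | case1 a b hab => simp [ancestors_of_lt_two hab] at h
  | case2 a b hab hℓ ih =>
    rw [ancestors_of_lt (by omega) hℓ, mem_insert, Prod.mk.injEq] at h
    rcases h with ⟨rfl, rfl⟩ | h
    · simp only [hℓ, decide_true, and_true]; omega
    · obtain ⟨h₁, h₂, rfl⟩ := ih h; exact ⟨h₁, by omega, rfl⟩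
  | case3 a b hab hℓ ih =>
    rw [ancestors_of_le (by omega) (by omega), mem_insert, Prod.mk.injEq] at h
    rcases h with ⟨rfl, rfl⟩ | h
    · simp only [hℓ, decide_false, and_true]; omega
    · obtain ⟨h₁, h₂, rfl⟩ := ih h; exact ⟨by omega, h₂, rfl⟩

theorem exists_forall_notMem_ancestors (σ : ℕ → Bool) {a b : ℕ} (hab : a < b) :
    ∃ ℓ ∈ Ico a b, ∀ c, (c, σ c) ∉ ancestors a b ℓ := by
  induction hk : b - a using Nat.strong_induction_on generalizing a b with
  | _ k ih =>
  by_cases h : b - a < 2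
  · exact ⟨a, by simp [hab], fun c => by simp [ancestors_of_lt_two h]⟩
  cases hσ : σ ((a + b) / 2)
  · obtain ⟨ℓ, hℓ, havoid⟩ := ih ((a + b) / 2 - a) (by omega) (by omega) rfl
    rw [mem_Ico] at hℓ
    refine ⟨ℓ, mem_Ico.2 ⟨hℓ.1, by omega⟩, fun c => ?_⟩
    rw [ancestors_of_lt (by omega) hℓ.2, mem_insert, not_or, Prod.mk.injEq]
    exact ⟨fun ⟨hc, hs⟩ => by simp [hc, hσ] at hs, havoid c⟩
  · obtain ⟨ℓ, hℓ, havoid⟩ := ih (b - (a + b) / 2) (by omega) (by omega) rfl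
    rw [mem_Ico] at hℓ
    refine ⟨ℓ, mem_Ico.2 ⟨by omega, hℓ.2⟩, fun c => ?_⟩
    rw [ancestors_of_le (by omega) hℓ.1, mem_insert, not_or, Prod.mk.injEq]
    exact ⟨fun ⟨hc, hs⟩ => by simp [hc, hσ] at hs, havoid c⟩

theorem disjoint_ancestors {a b ℓ₁ ℓ₂ : ℕ} (h : 2 ≤ b - a) (h₁ : ℓ₁ < (a + b) / 2)
    (h₂ : (a + b) / 2 ≤ ℓ₂) : Disjoint (ancestors a b ℓ₁) (ancestors a b ℓ₂) := by
  rw [ancestors_of_lt h h₁, ancestors_of_le h h₂, disjoint_left]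
  rintro ⟨c, s⟩ hc₁ hc₂
  rw [mem_insert, Prod.mk.injEq] at hc₁ hc₂
  rcases hc₁ with ⟨rfl, rfl⟩ | hc₁ <;> rcases hc₂ with ⟨hc, hs⟩ | hc₂
  · exact Bool.noConfusion hs
  · obtain ⟨_, _, -⟩ := mem_ancestors hc₂; omega
  · obtain ⟨_, _, -⟩ := mem_ancestors hc₁; omega
  · obtain ⟨_, _, -⟩ := mem_ancestors hc₁; obtain ⟨_, _, -⟩ := mem_ancestors hc₂; omega

/-- The demand `p * d` of a subtree with `p` leaves in excess of the `(2 * p - 1) * D` slots on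
the sides of its internal nodes and on the parent side above it. -/
def overflow (d D p : ℕ) : ℤ := max (p * d - (2 * p - 1) * D) 0

theorem overflow_nonneg (d D p : ℕ) : 0 ≤ overflow d D p := le_max_right _ _

theorem overflow_add_le {d D : ℕ} (hdD : d ≤ 2 * D) (p q : ℕ) :
    overflow d D p + overflow d D q ≤ D + overflow d D (p + q) := by
  have hdD' : (d : ℤ) ≤ 2 * D := by exact_mod_cast hdD
  have hp := mul_le_mul_of_nonneg_left hdD' (Nat.cast_nonneg (α := ℤ) p)
  have hq := mul_le_mul_of_nonneg_left hdD' (Nat.cast_nonneg (α := ℤ) q)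
  simp only [overflow]
  push_cast
  rw [max_def, max_def, max_def]
  split_ifs <;> linarith

variable {d D : ℕ}

theorem mul_card_le_of_children {a b c : ℕ} (h : 2 ≤ b - a) (hc : (a + b) / 2 = c)
    {β₁ β₂ : ℤ} (hβ₁ : 0 ≤ β₁) (hβ₂ : 0 ≤ β₂)
    (h₁ : ∀ L ⊆ Ico a c, L.Nonempty →
      (d : ℤ) * #L ≤ D * (#(L.biUnion (ancestors a c)) + 1) + β₁)
    (h₂ : ∀ L ⊆ Ico c b, L.Nonempty →
      (d : ℤ) * #L ≤ D * (#(L.biUnion (ancestors c b)) + 1) + β₂)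
    {L : Finset ℕ} (hL : L ⊆ Ico a b) :
    (d : ℤ) * #L ≤ D * #(L.biUnion (ancestors a b)) + β₁ + β₂ := by
  subst hc
  set L₁ := L.filter (· < (a + b) / 2)
  set L₂ := L.filter (¬ · < (a + b) / 2)
  have hL₁ : (d : ℤ) * #L₁ ≤ D * #(L₁.biUnion (ancestors a b)) + β₁ := by
    rcases L₁.eq_empty_or_nonempty with hne | hne
    · simp [hne, hβ₁]
    have hmem : ∀ ℓ ∈ L₁, ℓ < (a + b) / 2 := fun _ hℓ => (mem_filter.1 hℓ).2
    rw [biUnion_congr rfl fun ℓ hℓ => ancestors_of_lt h (hmem ℓ hℓ),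
      card_biUnion_insert hne fun ℓ _ hc => by obtain ⟨_, _, -⟩ := mem_ancestors hc; omega]
    push_cast
    exact h₁ L₁ (fun ℓ hℓ => by have := hL (mem_filter.1 hℓ).1; grind) hne
  have hL₂ : (d : ℤ) * #L₂ ≤ D * #(L₂.biUnion (ancestors a b)) + β₂ := by
    rcases L₂.eq_empty_or_nonempty with hne | hne
    · simp [hne, hβ₂]
    have hmem : ∀ ℓ ∈ L₂, (a + b) / 2 ≤ ℓ := fun _ hℓ =>
      not_lt.1 (mem_filter.1 hℓ).2
    rw [biUnion_congr rfl fun ℓ hℓ => ancestors_of_le h (hmem ℓ hℓ),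
      card_biUnion_insert hne fun ℓ _ hc => by obtain ⟨_, _, -⟩ := mem_ancestors hc; omega]
    push_cast
    exact h₂ L₂ (fun ℓ hℓ => by have := hL (mem_filter.1 hℓ).1; grind) hne
  have hcard : #L₁ + #L₂ = #L := card_filter_add_card_filter_not _
  have hsplit : #(L.biUnion (ancestors a b)) =
      #(L₁.biUnion (ancestors a b)) + #(L₂.biUnion (ancestors a b)) := by
    rw [← card_union_of_disjoint, ← union_biUnion, filter_union_filter_not_eq]
    refine (disjoint_biUnion_left _ _ _).2 fun ℓ₁ hℓ₁ => (disjoint_biUnion_right _ _ _).2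
      fun ℓ₂ hℓ₂ => ?_
    exact disjoint_ancestors h (mem_filter.1 hℓ₁).2 (not_lt.1 (mem_filter.1 hℓ₂).2)
  rw [← hcard, hsplit]
  push_cast
  linarith

theorem mul_card_le_add_overflow (hdD : d ≤ 2 * D) (a b : ℕ) :
    ∀ L ⊆ Ico a b, L.Nonempty →
      (d : ℤ) * #L ≤ D * (#(L.biUnion (ancestors a b)) + 1) + overflow d D (b - a) := by
  induction hk : b - a using Nat.strong_induction_on generalizing a b with
  | _ k ih =>
  intro L hL hne
  by_cases h : b - a < 2
  · have hcard : #L = 1 := le_antisymm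
      ((card_le_card hL).trans (by simp; omega)) hne.card_pos
    have hk : k = 1 := by have := (card_le_card hL).trans_lt' hne.card_pos; simp at this; omega
    have hT : L.biUnion (ancestors a b) = ∅ := by ext x; simp [ancestors_of_lt_two h]
    rw [hcard, hT, card_empty, overflow, hk]
    push_cast
    omega
  subst hk
  have := mul_card_le_of_children (by omega) rfl (overflow_nonneg d D _) (overflow_nonneg d D _)
    (ih _ (by omega) _ _ rfl) (ih _ (by omega) _ _ rfl) hL
  have := overflow_add_le hdD ((a + b) / 2 - a) (b - (a + b) / 2)
  rw [show (a + b) / 2 - a + (b - (a + b) / 2) = b - a by omega] at this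
  linarith

theorem mul_card_le_card_biUnion_ancestors {N : ℕ} (hN : Even N)
    (hND : N * d ≤ 2 * (N - 1) * D) (L : Finset ℕ) (hL : L ⊆ range N) :
    d * #L ≤ D * #(L.biUnion (ancestors 0 N)) := by
  obtain ⟨c, rfl⟩ := hN
  rcases Nat.eq_zero_or_pos c with rfl | hc
  · simp_all
  have hND' : (c + c : ℤ) * d ≤ 2 * (c + c - 1) * D := by
    have := hND; zify [show 1 ≤ c + c by omega] at this; exact this
  have hzero : overflow d D c = 0 := max_eq_right (by nlinarith)
  have hdD : d ≤ 2 * D := by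
    have : (d : ℤ) ≤ 2 * D := by nlinarith
    exact_mod_cast this
  have := mul_card_le_of_children (d := d) (D := D) (a := 0) (b := c + c) (c := c)
    (by omega) (by omega)
    (overflow_nonneg d D c) (overflow_nonneg d D c) ?_ ?_ (L := L) (by simpa using hL)
  · rw [hzero, add_zero, add_zero] at this; exact_mod_cast this
  · simpa using mul_card_le_add_overflow hdD 0 c
  · simpa [show c + c - c = c by omega] using mul_card_le_add_overflow hdD c (c + c)

end HalvingTree

section Sites

open HalvingTree

variable {N d D : ℕ}

theorem exists_injective_sites (hN : Even N) (hND : N * d ≤ 2 * (N - 1) * D) :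
    ∃ F : Fin N × Fin d → Fin N × Bool × Fin D, Function.Injective F ∧
      ∀ p, (((F p).1 : ℕ), (F p).2.1) ∈ ancestors 0 N p.1 := by
  let t : Fin N × Fin d → Finset ((ℕ × Bool) × Fin D) := fun p => ancestors 0 N p.1 ×ˢ univ
  have hall : ∀ s, #s ≤ #(s.biUnion t) := by
    intro s
    set L := s.image Prod.fst
    have hs : #s ≤ #L * d := by
      have : s ⊆ L ×ˢ (univ : Finset (Fin d)) :=
        subset_product.trans (product_subset_product_right (subset_univ _))
      simpa using card_le_card this
    have hT : s.biUnion t = (L.image Fin.val).biUnion (ancestors 0 N) ×ˢ univ := by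
      ext; simp [t, L]
    have hroot :=
      mul_card_le_card_biUnion_ancestors hN hND (L.image Fin.val) (by intro; simp; omega)
    rw [card_image_of_injective _ Fin.val_injective] at hroot
    rw [hT, card_product, card_univ, Fintype.card_fin]
    nlinarith
  obtain ⟨F, hF, hFt⟩ := (all_card_le_biUnion_card_iff_exists_injective t).1 hall
  have hlt : ∀ p, (F p).1.1 < N := fun p => (mem_ancestors (mem_product.1 (hFt p)).1).2.1
  refine ⟨fun p => (⟨(F p).1.1, hlt p⟩, (F p).1.2, (F p).2), fun p q h => hF ?_,
    fun p => (mem_product.1 (hFt p)).1⟩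
  simp only [Prod.mk.injEq, Fin.mk.injEq] at h
  exact Prod.ext (Prod.ext h.1 h.2.1) h.2.2

/-- A site `(c, s, k)` is slot `k` on side `s` of the node splitting at `c`. The items at that
node form a `D × D` grid: the left site `(c, true, k)` owns row `k`, the right site
`(c, false, k)` owns column `k`. -/
def siteItem (z : Fin N × Bool × Fin D) (u : Fin D) : Fin N × Fin D × Fin D :=
  bif z.2.1 then (z.1, z.2.2, u) else (z.1, u, z.2.2)

def siteGroup (z : Fin N × Bool × Fin D) : Finset (Fin N × Fin D × Fin D) :=
  univ.image (siteItem z)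

theorem card_siteGroup (z : Fin N × Bool × Fin D) : #(siteGroup z) = D := by
  rw [siteGroup, card_image_of_injective, card_univ, Fintype.card_fin]
  obtain ⟨c, s, k⟩ := z
  cases s <;> intro u u' h <;> simpa [siteItem] using h

theorem disjoint_siteGroup {z z' : Fin N × Bool × Fin D} (hne : z ≠ z')
    (hside : z.1 = z'.1 → z.2.1 = z'.2.1) : Disjoint (siteGroup z) (siteGroup z') := by
  obtain ⟨c, s, k⟩ := z
  obtain ⟨c', s', k'⟩ := z'
  simp only [siteGroup, disjoint_left, mem_image, mem_univ, true_and, not_exists]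
  rintro _ ⟨u, rfl⟩ u' h
  have hc : c' = c := by cases s <;> cases s' <;> simp_all [siteItem]
  subst hc
  obtain rfl : s = s' := hside rfl
  cases s <;> simp_all [siteItem]

theorem not_disjoint_siteGroup (c : Fin N) (k k' : Fin D) :
    ¬ Disjoint (siteGroup (c, true, k)) (siteGroup (c, false, k')) := by
  rw [not_disjoint_iff]
  exact ⟨(c, k, k'), mem_image_of_mem _ (mem_univ k'), mem_image_of_mem _ (mem_univ k)⟩

theorem side_eq_decide {F : Fin N × Fin d → Fin N × Bool × Fin D}
    (hF : ∀ p, (((F p).1 : ℕ), (F p).2.1) ∈ ancestors 0 N p.1) (p : Fin N × Fin d) :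
    (F p).2.1 = decide ((p.1 : ℕ) < (F p).1) :=
  (mem_ancestors (hF p)).2.2

theorem exists_ne_not_disjoint_siteGroup [NeZero N] {F : Fin N × Fin d → Fin N × Bool × Fin D}
    (hF : ∀ p, (((F p).1 : ℕ), (F p).2.1) ∈ ancestors 0 N p.1) (choice : Fin N → Fin d) :
    ∃ i i', i ≠ i' ∧
      ¬ Disjoint (siteGroup (F (i, choice i))) (siteGroup (F (i', choice i'))) := by
  classical
  let σ : ℕ → Bool := fun c =>
    decide (∃ i, ((F (i, choice i)).1 : ℕ) = c ∧ (F (i, choice i)).2.1 = true)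
  obtain ⟨ℓ, hℓ, havoid⟩ := exists_forall_notMem_ancestors σ (Nat.pos_of_neZero N)
  let i : Fin N := ⟨ℓ, (mem_Ico.1 hℓ).2⟩
  rcases hz : F (i, choice i) with ⟨c, s, k⟩
  have hs : s ≠ σ c := by
    rintro rfl; exact havoid c (by simpa [hz] using hF (i, choice i))
  cases s
  · obtain ⟨i', hc, hside⟩ :
        ∃ i', ((F (i', choice i')).1 : ℕ) = c ∧ (F (i', choice i')).2.1 = true := by
      simpa [σ] using hs.symm
    have hz' : F (i', choice i') = (c, true, (F (i', choice i')).2.2) :=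
      Prod.ext (Fin.ext hc) (Prod.ext hside rfl)
    refine ⟨i', i, fun h => ?_, ?_⟩
    · rw [h, hz] at hside; exact Bool.noConfusion hside
    · rw [hz, hz']; exact not_disjoint_siteGroup _ _ _
  · exact (hs (decide_eq_true ⟨i, by simp [hz]⟩).symm).elim

variable (F : Fin N × Fin d → Fin N × Bool × Fin D) [Nonempty (Fin N × Fin d)]

noncomputable def itemEnds (e : Fin N × Fin D × Fin D) : Sym2 (Fin N) :=
  s((Function.invFun F (e.1, true, e.2.1)).1, (Function.invFun F (e.1, false, e.2.2)).1)

theorem mem_itemEnds {F} (hF : Function.Injective F) {p : Fin N × Fin d}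
    {e : Fin N × Fin D × Fin D} (he : e ∈ siteGroup (F p)) : p.1 ∈ itemEnds F e := by
  obtain ⟨u, -, rfl⟩ := mem_image.1 he
  have hinv := Function.leftInverse_invFun hF p
  rcases hz : F p with ⟨c, s, k⟩
  rw [hz] at hinv
  cases s <;> simp [itemEnds, siteItem, hinv]

end Sites

theorem exists_intersecting_groups {N d D : ℕ} [NeZero N] [NeZero d] (hN : Even N)
    (hND : N * d ≤ 2 * (N - 1) * D) :
    ∃ (m : ℕ) (ep : Fin m → Sym2 (Fin N)) (G : Fin N → Fin d → Finset (Fin m)),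
      (∀ i j, #(G i j) = D) ∧ (∀ i, Pairwise fun j j' => Disjoint (G i j) (G i j')) ∧
      (∀ i j e, e ∈ G i j → i ∈ ep e) ∧
      ∀ choice : Fin N → Fin d,
        ∃ i i', i ≠ i' ∧ ¬ Disjoint (G i (choice i)) (G i' (choice i')) := by
  obtain ⟨F, hF, hanc⟩ := exists_injective_sites hN hND
  let e := Fintype.equivFin (Fin N × Fin D × Fin D)
  refine ⟨_, fun x => itemEnds F (e.symm x),
    fun i j => (siteGroup (F (i, j))).map e.toEmbedding,
    fun i j => by rw [card_map, card_siteGroup], fun i j j' hj => ?_,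
    fun i j x hx => mem_itemEnds hF (mem_map_equiv.1 hx), fun choice => ?_⟩
  · dsimp only
    rw [disjoint_map]
    refine disjoint_siteGroup (hF.ne fun h => hj (Prod.ext_iff.1 h).2) fun hc => ?_
    rw [side_eq_decide hanc, side_eq_decide hanc, hc]
  · obtain ⟨i, i', hi, h⟩ := exists_ne_not_disjoint_siteGroup hanc choice
    exact ⟨i, i', hi, by rwa [disjoint_map]⟩

theorem mul_le_two_mul_ceil {N : ℕ} (hN : 2 ≤ N) (d : ℕ) :
    N * d ≤ 2 * (N - 1) * ⌈(N : ℝ) * d / (2 * ((N : ℝ) - 1))⌉₊ := by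
  have hpos : (0 : ℝ) < 2 * ((N : ℝ) - 1) := by
    have : (2 : ℝ) ≤ N := by exact_mod_cast hN
    linarith
  have h := Nat.le_ceil ((N : ℝ) * d / (2 * ((N : ℝ) - 1)))
  rw [div_le_iff₀ hpos] at h
  have h' : (N : ℝ) * d ≤
      2 * ((N - 1 : ℕ) : ℝ) * ⌈(N : ℝ) * d / (2 * ((N : ℝ) - 1))⌉₊ := by
    rw [Nat.cast_sub (by omega : 1 ≤ N)]
    linarith
  exact_mod_cast h'

theorem exists_even_mul_le {n : ℕ} (hn : 2 ≤ n) (d : ℕ) :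
    ∃ N, Even N ∧ 2 ≤ N ∧ N ≤ n ∧ N * d ≤ 2 * (N - 1) * (if Odd n
              then ⌈(((n : ℝ) - 1) * d) / (2 * ((n : ℝ) - 2))⌉₊
              else ⌈((n : ℝ) * d) / (2 * ((n : ℝ) - 1))⌉₊) := by
  split_ifs with hodd
  · obtain ⟨k, rfl⟩ := hodd
    have hk : 1 ≤ k := by omega
    refine ⟨2 * k, even_two_mul k, by omega, by omega, ?_⟩
    have hceil : (((2 * k + 1 : ℕ) : ℝ) - 1) * d / (2 * (((2 * k + 1 : ℕ) : ℝ) - 2)) =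
        ((2 * k : ℕ) : ℝ) * d / (2 * (((2 * k : ℕ) : ℝ) - 1)) := by
      push_cast; ring
    rw [hceil]
    exact mul_le_two_mul_ceil (by omega) d
  · exact ⟨n, Nat.not_odd_iff_even.1 hodd, hn, le_rfl, mul_le_two_mul_ceil hn d⟩

/-- For every `n ≥ 2`, `d ≥ 1` and real `ε > 0`, there exists a
multi-graph instance with `n` XOS agents such that no allocation `X` satisfies
`v_i(X_i) ≥ (1 − 1/Δ_n(d) + ε)·μ_i^d` for all agents `i`, where
`Δ_n(d) = ⌈(n−1)d/(2(n−2))⌉` if `n` is odd and `Δ_n(d) = ⌈nd/(2(n−1))⌉` if `n` is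
even. -/
theorem stmt14 (n d : ℕ) (hn : 2 ≤ n) (hd : 1 ≤ d) (ε : ℝ) (hε : 0 < ε) :
    ∃ (m : ℕ) (I : GraphInstance (Fin n) (Fin m)),
      (∀ i, IsXOSVal (I.val i)) ∧
      ¬ ∃ X : Fin n → Finset (Fin m), IsAllocation X ∧
        ∀ i, (1 - 1 / (((if Odd n
              then ⌈(((n : ℝ) - 1) * d) / (2 * ((n : ℝ) - 2))⌉₊
              else ⌈((n : ℝ) * d) / (2 * ((n : ℝ) - 1))⌉₊) : ℕ) : ℝ) + ε)
            * mms (I.val i) d Finset.univ ≤ I.val i (X i) := by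
  have : NeZero d := ⟨by omega⟩
  obtain ⟨N, hN, hN2, hNn, hND⟩ := exists_even_mul_le hn d
  have : NeZero N := ⟨by omega⟩
  obtain ⟨m, ep, G, hcard, hdisj, hep, hmeet⟩ := exists_intersecting_groups hN hND
  exact ⟨m, exists_xos_instance_of_groups (Fin.castLEEmb hNn) ep G hcard hdisj hep hmeet hε⟩
end

section
/- In every multi-graph instance with n ≥ 1 agents whose valuations are all subadditive, there exists an orientation X with v_i(X_i) ≥ (1/2)·μ_i^n for every agent i, i.e., a 1/2-MMS orientation. -/
/-!
Fix an MMS partition `P i` of the items into `n` parts for every agent `i` and order the agents.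
A profile `m` lets every agent `j` pick a part `m j` of `P j`; an item goes to its larger endpoint
if that endpoint picked a part containing it, and to its smaller endpoint otherwise. What agent `i`
surely receives from a part `a` depends only on the picks of the agents above `i`, and two profiles
that differ at every agent above `i` together leave `i` all of `a`'s items incident to `i`. By
subadditivity, for each part `a` at most one of two such profiles leaves `i` less than
`v_i(P i a) / 2 ≥ μ_i / 2`.

Going down from the top agent, we maintain `k + 1` profiles that pick pairwise different parts at
every agent `j ≥ k`, each good for `j`. At agent `k - 1` the sets of bad parts of the `k + 1`
profiles are pairwise disjoint, so by Hall's theorem all profiles but one can be given pairwise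
different good parts. The single profile left at the bottom yields the orientation.
-/

open Finset

variable {V E : Type}

namespace Sym2

variable {α : Type*} [LinearOrder α]

theorem sup_mem (z : Sym2 α) : z.sup ∈ z := by
  induction z using Sym2.ind with
  | _ a b => rcases le_total a b with h | h <;> simp [h]

theorem inf_mem (z : Sym2 α) : z.inf ∈ z := by
  induction z using Sym2.ind with
  | _ a b => rcases le_total a b with h | h <;> simp [h]

theorem le_sup_of_mem {z : Sym2 α} {a : α} (h : a ∈ z) : a ≤ z.sup := by
  induction z using Sym2.ind with
  | _ b c => rcases Sym2.mem_iff.mp h with rfl | rfl <;> simp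

theorem inf_eq_of_mem_of_sup_ne {z : Sym2 α} {a : α} (h : a ∈ z) (hsup : z.sup ≠ a) :
    z.inf = a := by
  induction z using Sym2.ind with
  | _ b c =>
    simp only [sup_mk, inf_mk] at hsup ⊢
    rcases Sym2.mem_iff.mp h with rfl | rfl
    · exact min_eq_left (le_of_not_gt fun hlt => hsup (max_eq_left hlt.le))
    · exact min_eq_right (le_of_not_gt fun hlt => hsup (max_eq_right hlt.le))

end Sym2

open Function

theorem Fin.exists_succAbove_injective_avoiding {β : Type*} [Fintype β] [DecidableEq β] {k : ℕ}
    (bad : Fin (k + 2) → Finset β) (hbad : Pairwise (Disjoint on bad))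
    (hk : k + 1 ≤ Fintype.card β) :
    ∃ d : Fin (k + 2), ∃ f : Fin (k + 1) → β, f.Injective ∧ ∀ q, f q ∉ bad (d.succAbove q) := by
  obtain ⟨d, hd⟩ : ∃ d : Fin (k + 2), ∀ q, bad (d.succAbove q) ≠ univ := by
    by_cases hfull : ∃ r, bad r = univ
    · obtain ⟨r, hr⟩ := hfull
      refine ⟨r, fun q hq => ?_⟩
      have hβ : (univ : Finset β).Nonempty := card_pos.mp (by simp; omega)
      have : Disjoint (bad r) (bad (r.succAbove q)) := hbad (r.succAbove_ne q).symm
      rw [hq, hr, disjoint_self, bot_eq_empty] at this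
      exact hβ.ne_empty this
    · simp only [not_exists] at hfull
      exact ⟨0, fun q => hfull _⟩
  suffices hall : ∀ s : Finset (Fin (k + 1)), #s ≤ #(s.biUnion fun q => (bad (d.succAbove q))ᶜ) by
    obtain ⟨f, hf, hmem⟩ := (all_card_le_biUnion_card_iff_exists_injective _).mp hall
    exact ⟨d, f, hf, fun q => mem_compl.mp (hmem q)⟩
  intro s
  rcases s.eq_empty_or_nonempty with rfl | ⟨q, hq⟩
  · simp
  by_cases hsingle : #s ≤ 1
  · have hne : ((bad (d.succAbove q))ᶜ).Nonempty :=
      nonempty_iff_ne_empty.mpr (by simpa [compl_eq_empty_iff] using hd q)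
    have := card_le_card (subset_biUnion_of_mem (fun q => (bad (d.succAbove q))ᶜ) hq)
    have := hne.card_pos
    omega
  · obtain ⟨q', hq', hne⟩ := exists_mem_ne (s := s) (by omega) q
    have huniv : s.biUnion (fun q => (bad (d.succAbove q))ᶜ) = univ := by
      refine eq_univ_of_forall fun b => mem_biUnion.mpr ?_
      by_cases hb : b ∈ bad (d.succAbove q)
      · refine ⟨q', hq', mem_compl.mpr fun hb' => ?_⟩
        exact disjoint_left.mp (hbad (d.succAbove_right_injective.ne hne)) hb' hb
      · exact ⟨q, hq, mem_compl.mpr hb⟩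
    rw [huniv, card_univ]
    exact (card_le_univ s).trans (by simpa using hk)

theorem exists_isPartitionInto_forall_mms_le [DecidableEq E] [Fintype E] (v : Finset E → ℝ)
    {d : ℕ} (hd : 0 < d) (F : Finset E) :
    ∃ P : Fin d → Finset E, IsPartitionInto d P F ∧ ∀ t, mms v d F ≤ v (P t) := by
  set S := {x | ∃ P : Fin d → Finset E, IsPartitionInto d P F ∧ x = ⨅ t, v (P t)}
  have hfin : S.Finite :=
    (Set.finite_range fun P : Fin d → Finset E => ⨅ t, v (P t)).subset
      fun x ⟨P, _, hx⟩ => ⟨P, hx.symm⟩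
  have htrivial : IsPartitionInto d (fun t => if t = ⟨0, hd⟩ then F else ∅) F := by
    refine ⟨fun s t hst => ?_, ?_⟩
    · rcases eq_or_ne s ⟨0, hd⟩ with rfl | hs
      · simp [hst.symm]
      · simp [hs]
    · ext e
      simp only [mem_biUnion, mem_univ, true_and]
      exact ⟨fun ⟨t, ht⟩ => by split_ifs at ht <;> simp_all, fun he => ⟨⟨0, hd⟩, by simpa⟩⟩
  obtain ⟨P, hP, hmms⟩ : mms v d F ∈ S := Set.Nonempty.csSup_mem ⟨_, _, htrivial, rfl⟩ hfin
  exact ⟨P, hP, fun t => hmms ▸ ciInf_le (Set.finite_range _).bddBelow t⟩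

namespace GraphInstance

section Valuation

variable [DecidableEq E] (I : GraphInstance V E)

theorem val_union_of_forall_notMem_ep {i : V} {T : Finset E} (hT : ∀ e ∈ T, i ∉ I.ep e)
    (S : Finset E) : I.val i (T ∪ S) = I.val i S := by
  induction T using Finset.induction_on with
  | empty => rw [empty_union]
  | insert e T _ ih =>
    rw [insert_union, I.graphical i e (hT e (mem_insert_self e T)),
      ih fun e' he' => hT e' (mem_insert_of_mem he')]

theorem val_filter_mem_ep [DecidableEq V] (i : V) (S : Finset E) :
    I.val i (S.filter (i ∈ I.ep ·)) = I.val i S := by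
  conv_rhs => rw [← filter_union_filter_not_eq (i ∈ I.ep ·) S, union_comm]
  exact (I.val_union_of_forall_notMem_ep (fun e he => (mem_filter.mp he).2) _).symm

end Valuation

section Orientation

variable [DecidableEq E] (I : GraphInstance V E) {ι : Type} [LinearOrder V] (P : V → ι → Finset E)

def owner (m : V → ι) (e : E) : V :=
  if e ∈ P (I.ep e).sup (m (I.ep e).sup) then (I.ep e).sup else (I.ep e).inf

def orient [Fintype E] (m : V → ι) (i : V) : Finset E :=
  univ.filter fun e => I.owner P m e = i

def retained (m : V → ι) (i : V) (a : ι) : Finset E :=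
  (P i a).filter fun e =>
    i ∈ I.ep e ∧ ((I.ep e).sup = i ∨ e ∉ P (I.ep e).sup (m (I.ep e).sup))

theorem owner_mem_ep (m : V → ι) (e : E) : I.owner P m e ∈ I.ep e := by
  unfold owner
  split
  · exact Sym2.sup_mem _
  · exact Sym2.inf_mem _

theorem isOrientation_orient [Fintype E] (m : V → ι) : IsOrientation I (I.orient P m) := by
  refine ⟨fun i j hij => disjoint_left.mpr fun e hi hj => hij ?_, fun e => ?_⟩
  · exact (mem_filter.mp hi).2.symm.trans (mem_filter.mp hj).2
  · exact ⟨I.owner P m e, I.owner_mem_ep P m e, mem_filter.mpr ⟨mem_univ e, rfl⟩⟩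

theorem retained_subset_orient [Fintype E] (m : V → ι) (i : V) :
    I.retained P m i (m i) ⊆ I.orient P m i := by
  intro e he
  obtain ⟨heP, hi, hkeep⟩ := mem_filter.mp he
  refine mem_filter.mpr ⟨mem_univ e, ?_⟩
  unfold owner
  split_ifs with htop
  · exact hkeep.resolve_right (not_not.mpr htop)
  · exact Sym2.inf_eq_of_mem_of_sup_ne hi fun hsup => htop (hsup ▸ heP)

theorem retained_congr {m m' : V → ι} {i : V} (h : ∀ j, i < j → m j = m' j) (a : ι) :
    I.retained P m i a = I.retained P m' i a := by
  refine filter_congr fun e _ => and_congr_right fun hi => ?_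
  rcases (Sym2.le_sup_of_mem hi).eq_or_lt with htop | hlt
  · simp [← htop]
  · rw [h _ hlt]

theorem retained_union (hP : ∀ j, Pairwise (Disjoint on P j)) {m m' : V → ι} {i : V}
    (h : ∀ j, i < j → m j ≠ m' j) (a : ι) :
    I.retained P m i a ∪ I.retained P m' i a = (P i a).filter (i ∈ I.ep ·) := by
  refine (union_subset (monotone_filter_right _ fun _ _ h => h.1)
    (monotone_filter_right _ fun _ _ h => h.1)).antisymm fun e he => ?_
  obtain ⟨heP, hi⟩ := mem_filter.mp he
  by_cases hkeep : (I.ep e).sup = i ∨ e ∉ P (I.ep e).sup (m (I.ep e).sup)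
  · exact mem_union_left _ (mem_filter.mpr ⟨heP, hi, hkeep⟩)
  · simp only [not_or, not_not] at hkeep
    obtain ⟨hne, hmem⟩ := hkeep
    have hlt : i < (I.ep e).sup := (Sym2.le_sup_of_mem hi).lt_of_ne' hne
    refine mem_union_right _ (mem_filter.mpr ⟨heP, hi, Or.inr fun hmem' => ?_⟩)
    exact disjoint_left.mp (hP _ (h _ hlt)) hmem hmem'

theorem val_le_val_retained_add {i : V} (hsub : IsSubadditiveVal (I.val i))
    (hP : ∀ j, Pairwise (Disjoint on P j)) {m m' : V → ι} (h : ∀ j, i < j → m j ≠ m' j) (a : ι) :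
    I.val i (P i a) ≤ I.val i (I.retained P m i a) + I.val i (I.retained P m' i a) := by
  rw [← I.val_filter_mem_ep, ← I.retained_union P hP h]
  exact hsub _ _

end Orientation

section Family

variable [DecidableEq E] {n : ℕ} (I : GraphInstance (Fin n) E) (P : Fin n → Fin n → Finset E)
  (θ : Fin n → ℝ)

def Satisfies (i a : Fin n) (m : Fin n → Fin n) : Prop :=
  θ i ≤ 2 * I.val i (I.retained P m i a)

def IsStableFamily (k : ℕ) {s : ℕ} (F : Fin s → Fin n → Fin n) : Prop :=
  ∀ j : Fin n, k ≤ j → Injective (F · j) ∧ ∀ q, I.Satisfies P θ j (F q j) (F q)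

variable {I P θ}

theorem satisfies_congr {i a : Fin n} {m m' : Fin n → Fin n} (h : ∀ j, i < j → m j = m' j) :
    I.Satisfies P θ i a m ↔ I.Satisfies P θ i a m' := by
  rw [Satisfies, Satisfies, I.retained_congr P h]

theorem exists_isStableFamily_last (hP : ∀ j, Pairwise (Disjoint on P j))
    (hθ : ∀ i a, θ i ≤ I.val i (P i a)) {s : ℕ} (hs : s ≤ n) :
    ∃ F : Fin s → Fin n → Fin n, I.IsStableFamily P θ (n - 1) F := by
  refine ⟨fun q _ => Fin.castLE hs q, fun j hj => ⟨Fin.castLE_injective hs, fun q => ?_⟩⟩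
  set a := Fin.castLE hs q
  have hall : I.retained P (fun _ => a) j a = (P j a).filter (j ∈ I.ep ·) := by
    simpa using I.retained_union P hP (m := fun _ => a) (m' := fun _ => a)
      (fun j' hj' => absurd hj' (by omega)) a
  unfold Satisfies
  rw [hall, I.val_filter_mem_ep]
  linarith [hθ j a, I.val_nonneg j (P j a)]

theorem IsStableFamily.exists_pred (hsub : ∀ i, IsSubadditiveVal (I.val i))
    (hP : ∀ j, Pairwise (Disjoint on P j)) (hθ : ∀ i a, θ i ≤ I.val i (P i a))
    {k : ℕ} (hk : k < n) {F : Fin (k + 2) → Fin n → Fin n}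
    (hF : I.IsStableFamily P θ (k + 1) F) :
    ∃ G : Fin (k + 1) → Fin n → Fin n, I.IsStableFamily P θ k G := by
  classical
  set i : Fin n := ⟨k, hk⟩
  have hdiff {q q'} (hqq : q ≠ q') (j : Fin n) (hj : i < j) : F q j ≠ F q' j :=
    (hF j (Fin.lt_def.mp hj)).1.ne hqq
  set bad : Fin (k + 2) → Finset (Fin n) :=
    fun q => univ.filter fun a => ¬ I.Satisfies P θ i a (F q)
  have hbad : Pairwise (Disjoint on bad) := fun q q' hqq => disjoint_left.mpr fun a ha ha' => by
    simp only [bad, mem_filter, mem_univ, true_and, Satisfies, not_le] at ha ha'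
    linarith [I.val_le_val_retained_add P (hsub i) hP (hdiff hqq) a, hθ i a]
  obtain ⟨d, f, hf, hgood⟩ :=
    Fin.exists_succAbove_injective_avoiding bad hbad (by simpa using hk)
  simp only [bad, mem_filter, mem_univ, true_and, not_not] at hgood
  set G : Fin (k + 1) → Fin n → Fin n := fun q => update (F (d.succAbove q)) i (f q)
  have hG {q j} (hj : i < j) : G q j = F (d.succAbove q) j := update_of_ne hj.ne' ..
  refine ⟨G, fun j hj => ?_⟩
  rcases hj.eq_or_lt with hji | hlt
  · obtain rfl : j = i := Fin.ext hji.symm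
    refine ⟨by simpa [G] using hf, fun q => ?_⟩
    simpa [G, satisfies_congr fun j' hj' => hG hj'] using hgood q
  · have hij : i < j := hlt
    refine ⟨?_, fun q => ?_⟩
    · simp only [hG hij]
      exact (hF j hij).1.comp d.succAbove_right_injective
    · rw [hG hij, satisfies_congr fun j' hj' => hG (hij.trans hj')]
      exact (hF j hij).2 _

theorem exists_isStableFamily (hsub : ∀ i, IsSubadditiveVal (I.val i))
    (hP : ∀ j, Pairwise (Disjoint on P j)) (hθ : ∀ i a, θ i ≤ I.val i (P i a))
    {k : ℕ} (hk : k < n) : ∃ F : Fin (k + 1) → Fin n → Fin n, I.IsStableFamily P θ k F := by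
  induction h : n - 1 - k generalizing k with
  | zero =>
    obtain rfl : k = n - 1 := by omega
    exact exists_isStableFamily_last hP hθ (by omega)
  | succ d ih =>
    obtain ⟨F, hF⟩ := ih (k := k + 1) (by omega) (by omega)
    exact hF.exists_pred hsub hP hθ hk

end Family

end GraphInstance

/-- In every multi-graph instance with `n ≥ 1` subadditive agents,
there exists an orientation `X` with `v_i(X_i) ≥ (1/2)·μ_i^n` for every agent `i`,
i.e., a `1/2`-MMS orientation. -/
theorem stmt17 {n : ℕ} (hn : 1 ≤ n) {E : Type} [Fintype E] [DecidableEq E]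
    (I : GraphInstance (Fin n) E) (hsub : ∀ i, IsSubadditiveVal (I.val i)) :
    ∃ X : Fin n → Finset E, IsOrientation I X ∧
      ∀ i, (1 / 2 : ℝ) * mms (I.val i) n Finset.univ ≤ I.val i (X i) := by
  choose P hPart hP using fun i => exists_isPartitionInto_forall_mms_le (I.val i) hn univ
  obtain ⟨F, hF⟩ := I.exists_isStableFamily hsub (fun i s t => (hPart i).1 s t) hP hn
  refine ⟨I.orient P (F 0), I.isOrientation_orient P (F 0), fun i => ?_⟩
  have hi : I.Satisfies P _ i (F 0 i) (F 0) := (hF i (Nat.zero_le _)).2 0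
  calc (1 / 2 : ℝ) * mms (I.val i) n univ ≤ I.val i (I.retained P (F 0) i (F 0 i)) := by
        unfold GraphInstance.Satisfies at hi; linarith
    _ ≤ I.val i (I.orient P (F 0) i) := I.val_mono i (I.retained_subset_orient P (F 0) i)
end
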